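/- arXiv:2603.16378 — 6 statements merged into one kernel-verified Lean document; each statement's English description precedes it below -/
import Mathlib

section
/- Let f₁,…,f_s be nonzero polynomials in K[x₁,…,xₙ] with deg(fᵢ) = δᵢ, and suppose the sequence of top-degree homogeneous components (f₁ᵗ,…,f_sᵗ) is a regular sequence. Let d ∈ ℕ and suppose w = q₁f₁ + ⋯ + q_s f_s with deg(w) < d and each qᵢ either zero or homogeneous of degree d − δᵢ. Then there exist polynomials p₁,…,p_s with deg(pᵢ) < d − δᵢ such that w = p₁f₁ + ⋯ + p_s f_s. -/
open MvPolynomial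

/-- The homogeneous component of highest degree of a polynomial. -/
noncomputable def topHom {K : Type*} [Field K] {n : ℕ} (f : MvPolynomial (Fin n) K) :
    MvPolynomial (Fin n) K :=
  MvPolynomial.homogeneousComponent f.totalDegree f

section Helpers

variable {K : Type*} [Field K] {n : ℕ}

lemma sum_deg_lt {ι : Type*} (t : Finset ι) (g : ι → MvPolynomial (Fin n) K) (m : ℕ)
    (h : ∀ j ∈ t, g j = 0 ∨ (g j).totalDegree < m) :
    (∑ j ∈ t, g j) = 0 ∨ (∑ j ∈ t, g j).totalDegree < m := by
  rcases Nat.eq_zero_or_pos m with hm | hm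
  · left
    apply Finset.sum_eq_zero
    intro j hj
    rcases h j hj with h0 | hlt
    · exact h0
    · omega
  · right
    calc (∑ j ∈ t, g j).totalDegree ≤ t.sup fun j => (g j).totalDegree :=
          totalDegree_finset_sum _ _
      _ < m := by
          rw [Finset.sup_lt_iff (by simpa using hm)]
          intro j hj
          rcases h j hj with h0 | hlt
          · simpa [h0] using hm
          · exact hlt

lemma homogeneousComponent_mul_right (a b : MvPolynomial (Fin n) K) (k m : ℕ)
    (hb : b.IsHomogeneous k) :
    homogeneousComponent m (a * b)
      = if k ≤ m then homogeneousComponent (m - k) a * b else 0 := by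
  conv_lhs => rw [← sum_homogeneousComponent a, Finset.sum_mul, map_sum]
  have hterm : ∀ l, homogeneousComponent m (homogeneousComponent l a * b)
      = if m = l + k then homogeneousComponent l a * b else 0 := fun l =>
    homogeneousComponent_of_mem
      ((mem_homogeneousSubmodule _ _).2 ((homogeneousComponent_isHomogeneous l a).mul hb))
  simp only [hterm]
  by_cases hk : k ≤ m
  · rw [if_pos hk]
    have hcongr : ∀ l ∈ Finset.range (a.totalDegree + 1),
        (if m = l + k then homogeneousComponent l a * b else 0)
          = if l = m - k then homogeneousComponent l a * b else 0 := by
      intro l _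
      by_cases hl : l = m - k
      · rw [if_pos (by omega), if_pos hl]
      · rw [if_neg (by omega), if_neg hl]
    rw [Finset.sum_congr rfl hcongr,
      Finset.sum_ite_eq' (Finset.range (a.totalDegree + 1)) (m - k)
        (fun l => homogeneousComponent l a * b)]
    by_cases hmem : m - k ∈ Finset.range (a.totalDegree + 1)
    · rw [if_pos hmem]
    · rw [if_neg hmem, homogeneousComponent_eq_zero, zero_mul]
      simp only [Finset.mem_range] at hmem
      omega
  · rw [if_neg hk]
    apply Finset.sum_eq_zero
    intro l _
    rw [if_neg (by omega)]

lemma lower_deg (g : MvPolynomial (Fin n) K) :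
    g - topHom g = 0 ∨ (g - topHom g).totalDegree < g.totalDegree := by
  have h2 : g - topHom g = ∑ l ∈ Finset.range g.totalDegree, homogeneousComponent l g := by
    have h := sum_homogeneousComponent g
    rw [Finset.sum_range_succ] at h
    rw [topHom, eq_sub_of_add_eq h]
  rw [h2]
  apply sum_deg_lt
  intro l hl
  simp only [Finset.mem_range] at hl
  right
  exact lt_of_le_of_lt (homogeneousComponent_isHomogeneous l g).totalDegree_le hl

lemma sum_dite_lt {M : Type*} [AddCommMonoid M] {s : ℕ} (ι : Fin s)
    (F : {j : Fin s // j < ι} → M) :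
    (∑ j : Fin s, if h : j < ι then F ⟨j, h⟩ else 0) = ∑ j : {j : Fin s // j < ι}, F j := by
  classical
  rw [← Finset.sum_filter_add_sum_filter_not Finset.univ (· < ι)]
  have h2 : (∑ j ∈ Finset.filter (fun x => ¬ x < ι) Finset.univ,
      if h : j < ι then F ⟨j, h⟩ else 0) = 0 :=
    Finset.sum_eq_zero fun j hj => dif_neg (Finset.mem_filter.mp hj).2
  rw [h2, add_zero]
  have hmemiff : ∀ x : Fin s, x ∈ Finset.univ.filter (fun y => y < ι) ↔ x < ι := by simp
  rw [Finset.sum_subtype _ hmemiff (fun j => if h : j < ι then F ⟨j, h⟩ else 0)]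
  exact Finset.sum_congr rfl fun j _ => dif_pos j.2

end Helpers

/-- If the top-degree components of `f₁,…,f_s` form a regular sequence,
`w = q₁f₁+⋯+q_sf_s` with `deg w < d` and each `qᵢ` zero or homogeneous of degree `d − δᵢ`,
then `w = p₁f₁+⋯+p_sf_s` with `deg pᵢ < d − δᵢ`. -/
theorem stmt_1 {K : Type*} [Field K] {n s : ℕ}
    (f : Fin s → MvPolynomial (Fin n) K) (δ : Fin s → ℕ)
    (hf0 : ∀ i, f i ≠ 0) (hdeg : ∀ i, (f i).totalDegree = δ i)
    (hreg : ∀ i : Fin s, ∀ g : MvPolynomial (Fin n) K,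
      g * topHom (f i) ∈ Ideal.span {p | ∃ j : Fin s, j < i ∧ p = topHom (f j)} →
      g ∈ Ideal.span {p | ∃ j : Fin s, j < i ∧ p = topHom (f j)})
    (d : ℕ) (w : MvPolynomial (Fin n) K) (q : Fin s → MvPolynomial (Fin n) K)
    (hw : w = ∑ i, q i * f i)
    (hwd : w = 0 ∨ w.totalDegree < d)
    (hq : ∀ i, q i = 0 ∨ ∃ e : ℕ, e + δ i = d ∧ (q i).IsHomogeneous e) :
    ∃ p : Fin s → MvPolynomial (Fin n) K,
      w = ∑ i, p i * f i ∧ ∀ i, p i = 0 ∨ (p i).totalDegree + δ i < d := by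
  classical
  clear hf0
  suffices H : ∀ i : ℕ, ∀ (w : MvPolynomial (Fin n) K) (q : Fin s → MvPolynomial (Fin n) K),
      (∀ j : Fin s, ¬ (j.val < i) → q j = 0) →
      w = ∑ j, q j * f j →
      (w = 0 ∨ w.totalDegree < d) →
      (∀ j, q j = 0 ∨ ∃ e : ℕ, e + δ j = d ∧ (q j).IsHomogeneous e) →
      ∃ p : Fin s → MvPolynomial (Fin n) K,
        w = ∑ j, p j * f j ∧ ∀ j, p j = 0 ∨ (p j).totalDegree + δ j < d by
    exact H s w q (fun j h => absurd j.isLt h) hw hwd hq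
  intro i
  induction i with
  | zero =>
    intro w q hsupp hw hwd hq
    refine ⟨0, ?_, fun j => Or.inl rfl⟩
    rw [hw]
    apply Finset.sum_congr rfl
    intro j _
    simp [hsupp j (by omega)]
  | succ i IH =>
    intro w q hsupp hw hwd hq
    by_cases hi : i < s
    case neg =>
      exact IH w q (fun j h => absurd (lt_of_lt_of_le j.isLt (by omega)) h) hw hwd hq
    set ι : Fin s := ⟨i, hi⟩ with hι
    by_cases hqι : q ι = 0
    case pos =>
      refine IH w q (fun j h => ?_) hw hwd hq
      by_cases hji : j = ι
      · rw [hji]; exact hqι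
      · refine hsupp j ?_
        have hne : j.val ≠ i := fun hc => hji (Fin.ext hc)
        omega
    -- main case
    obtain ⟨e, he, hqh⟩ := (hq ι).resolve_left hqι
    have hT : ∀ j : Fin s, (topHom (f j)).IsHomogeneous (δ j) := by
      intro j
      rw [topHom, hdeg j]
      exact homogeneousComponent_isHomogeneous _ _
    -- Step 1 : the degree-d part of the relation
    have htop : ∑ j : Fin s, q j * topHom (f j) = 0 := by
      have h0 : homogeneousComponent d w = 0 := by
        rcases hwd with h | h
        · rw [h, map_zero]
        · exact homogeneousComponent_eq_zero _ _ h
      rw [hw, map_sum] at h0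
      rw [← h0]
      apply Finset.sum_congr rfl
      intro j _
      rcases hq j with h | ⟨ej, hej, hh⟩
      · rw [h, zero_mul, zero_mul, map_zero]
      · rw [mul_comm (q j) (f j),
          homogeneousComponent_mul_right (f j) (q j) ej d hh, if_pos (by omega)]
        have hde : d - ej = δ j := by omega
        rw [hde, ← hdeg j, mul_comm]
        rfl
    -- Step 2 : regularity gives a span membership
    have hsplit : ∀ j : Fin s, q j * topHom (f j)
        = (if j = ι then q ι * topHom (f ι) else 0)
          + (if h : j < ι then q j * topHom (f j) else 0) := by
      intro j
      rcases lt_trichotomy j ι with h | h | h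
      · rw [dif_pos h, if_neg (ne_of_lt h), zero_add]
      · subst h
        rw [if_pos rfl, dif_neg (lt_irrefl ι), add_zero]
      · rw [if_neg (ne_of_gt h), dif_neg (not_lt_of_gt h), add_zero,
          hsupp j (by
            have hgt : i < j.val := h
            omega), zero_mul]
    have hmem : q ι ∈ Ideal.span {p | ∃ j : Fin s, j < ι ∧ p = topHom (f j)} := by
      apply hreg ι
      have hqT : q ι * topHom (f ι)
          = - ∑ j : Fin s, (if h : j < ι then q j * topHom (f j) else 0) := by
        have h := htop
        rw [Finset.sum_congr rfl (fun j _ => hsplit j), Finset.sum_add_distrib,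
          Finset.sum_ite_eq' Finset.univ ι (fun _ => q ι * topHom (f ι)),
          if_pos (Finset.mem_univ ι)] at h
        linear_combination h
      rw [hqT]
      apply neg_mem
      apply sum_mem
      intro j _
      by_cases h : j < ι
      · rw [dif_pos h]
        exact Ideal.mul_mem_left _ _ (Ideal.subset_span ⟨j, h, rfl⟩)
      · rw [dif_neg h]
        exact zero_mem _
    -- Step 3 : write q ι as a combination of earlier tops
    have hSeq : {p | ∃ j : Fin s, j < ι ∧ p = topHom (f j)}
        = Set.range (fun j : {j : Fin s // j < ι} => topHom (f j.1)) := by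
      ext p
      constructor
      · rintro ⟨j, hj, rfl⟩; exact ⟨⟨j, hj⟩, rfl⟩
      · rintro ⟨⟨j, hj⟩, rfl⟩; exact ⟨j, hj, rfl⟩
    rw [hSeq] at hmem
    obtain ⟨c, hc⟩ := Ideal.mem_span_range_iff_exists_fun.mp hmem
    -- Step 4 : homogenize the coefficients
    set h : Fin s → MvPolynomial (Fin n) K := fun j =>
      if hj : j < ι then
        (if δ j ≤ e then homogeneousComponent (e - δ j) (c ⟨j, hj⟩) else 0)
      else 0 with hh_def
    have hh0 : ∀ j : Fin s, ¬ j < ι → h j = 0 := fun j hj => dif_neg hj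
    have hhom : ∀ j : Fin s, h j = 0 ∨ ((h j).IsHomogeneous (e - δ j) ∧ δ j ≤ e) := by
      intro j
      by_cases hj : j < ι
      · by_cases hd : δ j ≤ e
        · right
          refine ⟨?_, hd⟩
          rw [hh_def]
          simp only [dif_pos hj, if_pos hd]
          exact homogeneousComponent_isHomogeneous _ _
        · left
          rw [hh_def]
          simp only [dif_pos hj, if_neg hd]
      · left; exact hh0 j hj
    have hhι : q ι = ∑ j : Fin s, h j * topHom (f j) := by
      have hcomp : homogeneousComponent e (q ι) = q ι := by
        rw [homogeneousComponent_of_mem ((mem_homogeneousSubmodule _ _).2 hqh), if_pos rfl]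
      have hce := congrArg (homogeneousComponent e) hc
      rw [map_sum, hcomp] at hce
      rw [← hce]
      have hterm : ∀ j : {j : Fin s // j < ι},
          homogeneousComponent e (c j * topHom (f j.1)) = h j.1 * topHom (f j.1) := by
        intro j
        rw [homogeneousComponent_mul_right (c j) (topHom (f j.1)) (δ j.1) e (hT j.1),
          hh_def]
        simp only [dif_pos j.2]
        by_cases hd : δ j.1 ≤ e
        · rw [if_pos hd, if_pos hd]
        · rw [if_neg hd, if_neg hd, zero_mul]
      rw [Finset.sum_congr rfl (fun j _ => hterm j),
        ← sum_dite_lt ι (fun j => h j.1 * topHom (f j.1))]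
      apply Finset.sum_congr rfl
      intro j _
      by_cases hj : j < ι
      · rw [dif_pos hj]
      · rw [dif_neg hj, hh0 j hj, zero_mul]
    -- Step 5 : definitions
    set r : Fin s → MvPolynomial (Fin n) K := fun j => f j - topHom (f j) with hr_def
    have hr : ∀ j, r j = 0 ∨ (r j).totalDegree < δ j := by
      intro j
      have hld := lower_deg (f j)
      rwa [hdeg j] at hld
    have hfr : ∀ j, topHom (f j) + r j = f j := fun j => by rw [hr_def]; ring
    set q' : Fin s → MvPolynomial (Fin n) K := fun j =>
      if j < ι then q j + h j * topHom (f ι) else 0 with hq'_def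
    set p₀ : Fin s → MvPolynomial (Fin n) K := fun j =>
      if j < ι then h j * r ι
      else if j = ι then - ∑ k : Fin s, h k * r k
      else 0 with hp₀_def
    have hq'lt : ∀ j, j < ι → q' j = q j + h j * topHom (f ι) := by
      intro j hj
      simp only [hq'_def]
      rw [if_pos hj]
    have hq'ge : ∀ j, ¬ j < ι → q' j = 0 := by
      intro j hj
      simp only [hq'_def]
      rw [if_neg hj]
    have hp₀lt : ∀ j, j < ι → p₀ j = h j * r ι := by
      intro j hj
      simp only [hp₀_def]
      rw [if_pos hj]
    have hp₀ι : p₀ ι = - ∑ k : Fin s, h k * r k := by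
      simp only [hp₀_def]
      rw [if_neg (lt_irrefl ι), if_pos trivial]
    have hp₀gt : ∀ j, ι < j → p₀ j = 0 := by
      intro j hj
      simp only [hp₀_def]
      rw [if_neg (not_lt_of_gt hj), if_neg (ne_of_gt hj)]
    -- Step 6 : the rewriting identity
    have hkey : ∑ j : Fin s, q j * f j
        = (∑ j : Fin s, q' j * f j) + ∑ j : Fin s, p₀ j * f j := by
      have hHsum : ∑ j : Fin s, h j * f j = q ι + ∑ k : Fin s, h k * r k := by
        rw [hhι, ← Finset.sum_add_distrib]
        apply Finset.sum_congr rfl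
        intro j _
        rw [← mul_add, hfr j]
      have hterm : ∀ j : Fin s, q' j * f j + p₀ j * f j
          = q j * f j + (h j * f ι) * f j
            - (if j = ι then (q ι + ∑ k : Fin s, h k * r k) * f ι else 0) := by
        intro j
        rcases lt_trichotomy j ι with hj | hj | hj
        · rw [hq'lt j hj, hp₀lt j hj, if_neg (ne_of_lt hj)]
          have hx : (q j + h j * topHom (f ι)) * f j + h j * r ι * f j
              = q j * f j + h j * (topHom (f ι) + r ι) * f j := by ring
          rw [hx, hfr ι]
          ring
        · subst hj
          rw [hq'ge ι (lt_irrefl ι), hp₀ι, hh0 ι (lt_irrefl ι), if_pos rfl]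
          ring
        · rw [hq'ge j (not_lt_of_gt hj), hp₀gt j hj, if_neg (ne_of_gt hj),
            hsupp j (by
              have hgt : i < j.val := hj
              omega), hh0 j (not_lt_of_gt hj)]
          ring
      have hfin : ∑ j : Fin s, h j * f ι * f j
          = (q ι + ∑ k : Fin s, h k * r k) * f ι := by
        rw [← hHsum, Finset.sum_mul]
        apply Finset.sum_congr rfl
        intro j _
        ring
      rw [← Finset.sum_add_distrib, Finset.sum_congr rfl (fun j _ => hterm j),
        Finset.sum_sub_distrib, Finset.sum_add_distrib,
        Finset.sum_ite_eq' Finset.univ ι (fun _ => (q ι + ∑ k : Fin s, h k * r k) * f ι),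
        if_pos (Finset.mem_univ ι), hfin]
      ring
    -- Step 7 : degree bounds for p₀
    have hp₀deg : ∀ j : Fin s, p₀ j = 0 ∨ (p₀ j).totalDegree + δ j < d := by
      intro j
      rcases lt_trichotomy j ι with hj | hj | hj
      · rw [hp₀lt j hj]
        rcases hhom j with h0 | ⟨hhj, hde⟩
        · left; rw [h0, zero_mul]
        · rcases hr ι with h0 | hrι
          · left; rw [h0, mul_zero]
          · right
            have h1 : (h j * r ι).totalDegree ≤ (h j).totalDegree + (r ι).totalDegree :=
              totalDegree_mul _ _
            have h2 : (h j).totalDegree ≤ e - δ j := hhj.totalDegree_le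
            omega
      · subst hj
        rw [hp₀ι]
        have hterms : ∀ k ∈ (Finset.univ : Finset (Fin s)),
            h k * r k = 0 ∨ (h k * r k).totalDegree < e := by
          intro k _
          rcases hhom k with h0 | ⟨hhk, hde⟩
          · left; rw [h0, zero_mul]
          · rcases hr k with h0 | hrk
            · left; rw [h0, mul_zero]
            · right
              have h1 : (h k * r k).totalDegree ≤ (h k).totalDegree + (r k).totalDegree :=
                totalDegree_mul _ _
              have h2 : (h k).totalDegree ≤ e - δ k := hhk.totalDegree_le
              omega
        rcases sum_deg_lt Finset.univ (fun k => h k * r k) e hterms with h0 | hlt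
        · left; rw [h0, neg_zero]
        · right
          rw [totalDegree_neg]
          omega
      · left
        exact hp₀gt j hj
    -- Step 8 : properties of q'
    have hq'supp : ∀ j : Fin s, ¬ (j.val < i) → q' j = 0 := by
      intro j hj
      exact hq'ge j (fun hc => hj hc)
    have hq'hom : ∀ j, q' j = 0 ∨ ∃ e' : ℕ, e' + δ j = d ∧ (q' j).IsHomogeneous e' := by
      intro j
      by_cases hj : j < ι
      · have hq'j : q' j = q j + h j * topHom (f ι) := hq'lt j hj
        by_cases hhj : h j = 0
        · rw [hq'j, hhj, zero_mul, add_zero]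
          exact hq j
        · obtain ⟨hhom_j, hde⟩ := (hhom j).resolve_left hhj
          right
          refine ⟨d - δ j, by omega, ?_⟩
          have h1 : (h j * topHom (f ι)).IsHomogeneous (d - δ j) := by
            have hm := hhom_j.mul (hT ι)
            have heq : e - δ j + δ ι = d - δ j := by omega
            rwa [heq] at hm
          have h2 : (q j).IsHomogeneous (d - δ j) := by
            rcases hq j with h0 | ⟨ej, hej, hj2⟩
            · rw [h0]; exact isHomogeneous_zero _ _ _
            · have hej' : ej = d - δ j := by omega
              rwa [hej'] at hj2
          rw [hq'j]
          exact h2.add h1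
      · left
        exact hq'ge j hj
    -- Step 9 : the new remainder has small degree
    have hp₀f : (∑ j : Fin s, p₀ j * f j) = 0
        ∨ (∑ j : Fin s, p₀ j * f j).totalDegree < d := by
      apply sum_deg_lt
      intro j _
      rcases hp₀deg j with h0 | hlt
      · left; rw [h0, zero_mul]
      · right
        have h1 : (p₀ j * f j).totalDegree ≤ (p₀ j).totalDegree + (f j).totalDegree :=
          totalDegree_mul _ _
        rw [hdeg j] at h1
        omega
    have hw'd : (∑ j : Fin s, q' j * f j) = 0
        ∨ (∑ j : Fin s, q' j * f j).totalDegree < d := by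
      have hW : (∑ j : Fin s, q' j * f j) = w - ∑ j : Fin s, p₀ j * f j := by
        rw [hw, hkey]; ring
      rw [hW]
      rcases hwd with hw0 | hwlt
      · rcases hp₀f with h0 | hlt
        · left; rw [hw0, h0, sub_zero]
        · right
          rw [hw0, zero_sub, totalDegree_neg]
          exact hlt
      · rcases hp₀f with h0 | hlt
        · rw [h0, sub_zero]; right; exact hwlt
        · right
          calc (w - ∑ j : Fin s, p₀ j * f j).totalDegree
              = (w + -(∑ j : Fin s, p₀ j * f j)).totalDegree := by rw [sub_eq_add_neg]
            _ ≤ max w.totalDegree (-(∑ j : Fin s, p₀ j * f j)).totalDegree :=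
                totalDegree_add _ _
            _ < d := by rw [totalDegree_neg]; omega
    -- Step 10 : apply the induction hypothesis and conclude
    obtain ⟨p', hp'w, hp'deg⟩ := IH (∑ j : Fin s, q' j * f j) q' hq'supp rfl hw'd hq'hom
    refine ⟨fun j => p' j + p₀ j, ?_, ?_⟩
    · show w = ∑ j : Fin s, (p' j + p₀ j) * f j
      rw [hw, hkey, hp'w, ← Finset.sum_add_distrib]
      exact Finset.sum_congr rfl fun j _ => (add_mul _ _ _).symm
    · intro j
      show p' j + p₀ j = 0 ∨ (p' j + p₀ j).totalDegree + δ j < d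
      rcases hp'deg j with h1 | h1
      · rcases hp₀deg j with h2 | h2
        · left; rw [h1, h2, add_zero]
        · right; rw [h1, zero_add]; exact h2
      · rcases hp₀deg j with h2 | h2
        · right; rw [h2, add_zero]; exact h1
        · right
          have h3 : (p' j + p₀ j).totalDegree ≤ max (p' j).totalDegree (p₀ j).totalDegree :=
            totalDegree_add _ _
          rcases max_cases (p' j).totalDegree (p₀ j).totalDegree with ⟨hmax, _⟩ | ⟨hmax, _⟩ <;>
            omega
end

section
/- Let f₁,…,f_s be nonzero polynomials in K[x₁,…,xₙ] with deg(fᵢ) = δᵢ, and suppose (f₁ᵗ,…,f_sᵗ) is a regular sequence. Let d ∈ ℕ. If w = q₁f₁ + ⋯ + q_s f_s with deg(w) < d and deg(qᵢ) ≤ d − δᵢ for all i, then there exist h₁,…,h_s with deg(hᵢ) < d − δᵢ and w = h₁f₁ + ⋯ + h_s f_s. -/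
/-!
Compare the components of degree `d` in `w = ∑ qᵢ fᵢ`. As `deg w < d`, they give
`∑ⱼ top(qⱼ) fⱼᵗ = 0`, the sum running over the indices `j` with `deg qⱼ + δⱼ = d`. If `i` is the
largest such index, regularity of `fᵗ` puts `top(qᵢ)` in `(fⱼᵗ : j < i)`, with homogeneous
coefficients: `top(qᵢ) = ∑_{j<i} bⱼ fⱼᵗ`. Replacing `qᵢ` by `qᵢ - ∑ bⱼ fⱼ` and `qⱼ` by `qⱼ + bⱼ fᵢ`
leaves `w` unchanged, lowers the degree of the `i`-th coefficient and touches only smaller indices,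
so a descending induction on `i` finishes.
-/

open MvPolynomial

namespace MvPolynomial

variable {σ R : Type*} [CommRing R]

variable (σ R) in
noncomputable def degreeLT (k : ℕ) : Submodule R (MvPolynomial σ R) :=
  restrictSupport R {m | m.degree < k}

theorem mem_degreeLT {p : MvPolynomial σ R} {k : ℕ} :
    p ∈ degreeLT σ R k ↔ p = 0 ∨ p.totalDegree < k := by
  change (∀ m ∈ p.support, m.degree < k) ↔ _
  rcases eq_or_ne p 0 with rfl | hp
  · simp
  simp only [hp, false_or]
  refine ⟨fun h => ?_, fun h m hm => (le_totalDegree hm).trans_lt h⟩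
  obtain ⟨m, hm, hmax⟩ := p.support.exists_max_image Finsupp.degree (support_nonempty.2 hp)
  exact (Finset.sup_le hmax).trans_lt (h m hm)

theorem degreeLT_mono {a b : ℕ} (h : a ≤ b) : degreeLT σ R a ≤ degreeLT σ R b :=
  restrictSupport_mono (R := R) fun _ hm => lt_of_lt_of_le hm h

theorem homogeneousComponent_eq_zero_of_mem_degreeLT {p : MvPolynomial σ R} {k j : ℕ}
    (hp : p ∈ degreeLT σ R k) (hj : k ≤ j) : homogeneousComponent j p = 0 := by
  rcases mem_degreeLT.1 hp with rfl | hp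
  · exact map_zero _
  · exact homogeneousComponent_eq_zero j p (hp.trans_le hj)

theorem mul_mem_degreeLT {p q : MvPolynomial σ R} {a b c : ℕ} (hp : p ∈ degreeLT σ R a)
    (hq : q ∈ degreeLT σ R b) (h : ∀ x y, x < a → y < b → x + y < c) :
    p * q ∈ degreeLT σ R c := by
  rcases mem_degreeLT.1 hp with rfl | hp
  · simp
  rcases mem_degreeLT.1 hq with rfl | hq
  · simp
  exact mem_degreeLT.2 (.inr ((totalDegree_mul p q).trans_lt (h _ _ hp hq)))

theorem sub_homogeneousComponent_mem_degreeLT {p : MvPolynomial σ R} {k : ℕ}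
    (hp : p ∈ degreeLT σ R (k + 1)) : p - homogeneousComponent k p ∈ degreeLT σ R k := by
  rw [degreeLT, mem_restrictSupport_iff] at hp ⊢
  intro m hm
  rw [Finset.mem_coe, mem_support_iff, coeff_sub, coeff_homogeneousComponent] at hm
  split_ifs at hm with hk
  · exact absurd (sub_self _) hm
  · rw [sub_zero] at hm
    exact lt_of_le_of_ne (Nat.lt_succ_iff.1 (hp (mem_support_iff.2 hm))) hk

theorem sub_homogeneousComponent_totalDegree_mem_degreeLT (p : MvPolynomial σ R) :
    p - homogeneousComponent p.totalDegree p ∈ degreeLT σ R p.totalDegree :=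
  sub_homogeneousComponent_mem_degreeLT (mem_degreeLT.2 (.inr p.totalDegree.lt_succ_self))

theorem homogeneousComponent_mul_of_isHomogeneous {φ : MvPolynomial σ R} {e : ℕ}
    (hφ : φ.IsHomogeneous e) (p : MvPolynomial σ R) (k : ℕ) :
    homogeneousComponent k (p * φ) = if e ≤ k then homogeneousComponent (k - e) p * φ else 0 := by
  let := gradedAlgebra (σ := σ) (R := R)
  simpa [← decomposition.decompose'_apply] using
    DirectSum.coe_decompose_mul_of_right_mem (𝒜 := homogeneousSubmodule σ R) k (a := p) hφ

theorem homogeneousComponent_mul_of_sub_mem_degreeLT {f T p : MvPolynomial σ R} {e k : ℕ}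
    (hT : T.IsHomogeneous e) (hfT : f - T ∈ degreeLT σ R e) (hp : p ∈ degreeLT σ R (k + 1 - e)) :
    homogeneousComponent k (p * f) = homogeneousComponent (k - e) p * T := by
  have hlow : homogeneousComponent k (p * (f - T)) = 0 :=
    homogeneousComponent_eq_zero_of_mem_degreeLT (mul_mem_degreeLT hp hfT (by omega)) le_rfl
  rw [show p * f = p * T + p * (f - T) by ring, map_add, hlow, add_zero,
    homogeneousComponent_mul_of_isHomogeneous hT]
  split_ifs with he
  · rfl
  · obtain rfl : p = 0 := (mem_degreeLT.1 hp).resolve_right (by omega)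
    simp

theorem exists_eq_sum_mul_of_isHomogeneous_of_mem_span {ι : Type*} [Fintype ι]
    {T : ι → MvPolynomial σ R} {δ : ι → ℕ} (hT : ∀ j, (T j).IsHomogeneous (δ j)) {t : Set ι}
    {g : MvPolynomial σ R} {D : ℕ} (hg : g.IsHomogeneous D) (hmem : g ∈ Ideal.span (T '' t)) :
    ∃ b : ι → MvPolynomial σ R, g = ∑ j, b j * T j ∧ (∀ j ∉ t, b j = 0) ∧
      ∀ j, b j ∈ degreeLT σ R (D + 1 - δ j) := by
  classical
  obtain ⟨l, hl, rfl⟩ := (Finsupp.mem_span_image_iff_linearCombination _).1 hmem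
  refine ⟨fun j => if δ j ≤ D then homogeneousComponent (D - δ j) (l j) else 0, ?_, ?_, ?_⟩
  · rw [← homogeneousComponent_eq_self hg, Finsupp.linearCombination_apply,
      Finsupp.sum_fintype _ _ (by simp), map_sum]
    simp [homogeneousComponent_mul_of_isHomogeneous (hT _), ite_mul]
  · intro j hj
    simp [(Finsupp.mem_supported' _ _).1 hl j hj]
  · intro j
    dsimp only
    split_ifs with h
    · exact mem_degreeLT.2 <| .inr <|
        (homogeneousComponent_isHomogeneous _ _).totalDegree_le.trans_lt (by omega)
    · exact zero_mem _

section Reduction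

-- `q j ∈ degreeLT σ R (d + 1 - δ j)` encodes `q j = 0 ∨ deg (q j) + δ j ≤ d`, and
-- `degreeLT σ R (d - δ j)` the strict version; truncated subtraction makes both `{0}` when
-- `δ j` exceeds the bound.

variable {ι : Type*} [Fintype ι] [LinearOrder ι] {f T q : ι → MvPolynomial σ R} {δ : ι → ℕ}
  {d : ℕ} {i : ι}

theorem homogeneousComponent_mul_mem_span_Iio
    (hT : ∀ j, (T j).IsHomogeneous (δ j)) (hfT : ∀ j, f j - T j ∈ degreeLT σ R (δ j))
    (hw : ∑ j, q j * f j ∈ degreeLT σ R d) (hq : ∀ j, q j ∈ degreeLT σ R (d + 1 - δ j))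
    (hgt : ∀ j, i < j → q j ∈ degreeLT σ R (d - δ j)) :
    homogeneousComponent (d - δ i) (q i) * T i ∈ Ideal.span (T '' Set.Iio i) := by
  have htop : ∑ j, homogeneousComponent (d - δ j) (q j) * T j = 0 := by
    rw [← homogeneousComponent_eq_zero_of_mem_degreeLT hw le_rfl, map_sum]
    exact Finset.sum_congr rfl fun j _ =>
      (homogeneousComponent_mul_of_sub_mem_degreeLT (hT j) (hfT j) (hq j)).symm
  rw [← Finset.add_sum_erase _ _ (Finset.mem_univ i), add_eq_zero_iff_eq_neg] at htop
  rw [htop]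
  refine neg_mem (Ideal.sum_mem _ fun j hj => ?_)
  rcases lt_trichotomy j i with hji | rfl | hij
  · exact Ideal.mul_mem_left _ _ (Ideal.subset_span ⟨j, hji, rfl⟩)
  · exact absurd hj (Finset.notMem_erase _ _)
  · rw [homogeneousComponent_eq_zero_of_mem_degreeLT (hgt j hij) le_rfl, zero_mul]
    exact zero_mem _

theorem exists_sum_mul_eq_lowerDegree_step
    (hT : ∀ j, (T j).IsHomogeneous (δ j)) (hfT : ∀ j, f j - T j ∈ degreeLT σ R (δ j))
    (hreg : ∀ g, g * T i ∈ Ideal.span (T '' Set.Iio i) → g ∈ Ideal.span (T '' Set.Iio i))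
    (hw : ∑ j, q j * f j ∈ degreeLT σ R d) (hq : ∀ j, q j ∈ degreeLT σ R (d + 1 - δ j))
    (hgt : ∀ j, i < j → q j ∈ degreeLT σ R (d - δ j)) :
    ∃ q' : ι → MvPolynomial σ R, ∑ j, q' j * f j = ∑ j, q j * f j ∧
      (∀ j, q' j ∈ degreeLT σ R (d + 1 - δ j)) ∧ ∀ j, i ≤ j → q' j ∈ degreeLT σ R (d - δ j) := by
  classical
  by_cases hδ : d < δ i
  · refine ⟨q, rfl, hq, fun j hj => ?_⟩
    rcases hj.eq_or_lt with rfl | hij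
    · rw [show d - δ i = d + 1 - δ i by omega]
      exact hq i
    · exact hgt j hij
  obtain ⟨b, hgb, hb_Iio, hb_deg⟩ := exists_eq_sum_mul_of_isHomogeneous_of_mem_span hT
    (homogeneousComponent_isHomogeneous (d - δ i) (q i))
    (hreg _ (homogeneousComponent_mul_mem_span_Iio hT hfT hw hq hgt))
  have hbi : b i = 0 := hb_Iio i (lt_irrefl i)
  have hfi : f i ∈ degreeLT σ R (δ i + 1) := by
    simpa using add_mem (mem_degreeLT.2 (.inr (Nat.lt_succ_of_le (hT i).totalDegree_le)))
      (degreeLT_mono (Nat.le_succ _) (hfT i))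
  have hlow : q i - ∑ k, b k * f k ∈ degreeLT σ R (d - δ i) := by
    have : q i - ∑ k, b k * f k =
        (q i - homogeneousComponent (d - δ i) (q i)) - ∑ k, b k * (f k - T k) := by
      simp only [hgb, mul_sub, Finset.sum_sub_distrib]
      ring
    rw [this]
    exact sub_mem (sub_homogeneousComponent_mem_degreeLT (degreeLT_mono (by omega) (hq i)))
      (sum_mem fun k _ => mul_mem_degreeLT (hb_deg k) (hfT k) (by omega))
  -- Move `b k * f i * f k` from the `i`-th summand to the `k`-th; the sum is unchanged.
  refine ⟨fun j => q j + b j * f i - if j = i then ∑ k, b k * f k else 0, ?_, fun j => ?_,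
    fun j hj => ?_⟩
  · simp only [sub_mul, add_mul, ite_mul, zero_mul, Finset.sum_sub_distrib,
      Finset.sum_add_distrib, Finset.sum_ite_eq', Finset.mem_univ, if_true]
    simp_rw [mul_right_comm (b _) (f i), ← Finset.sum_mul, add_sub_cancel_right]
  · dsimp only
    split_ifs with hji
    · subst hji
      simpa [hbi] using degreeLT_mono (by omega) hlow
    · simpa using add_mem (hq j) (mul_mem_degreeLT (hb_deg j) hfi (by omega))
  · rcases hj.eq_or_lt with rfl | hij
    · simpa [hbi] using hlow
    · simpa [hb_Iio j (not_lt.2 hij.le), hij.ne'] using hgt j hij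

end Reduction

theorem exists_sum_mul_eq_lowerDegree {s : ℕ} {f T q : Fin s → MvPolynomial σ R} {δ : Fin s → ℕ}
    {d : ℕ} (hT : ∀ j, (T j).IsHomogeneous (δ j)) (hfT : ∀ j, f j - T j ∈ degreeLT σ R (δ j))
    (hreg : ∀ i g, g * T i ∈ Ideal.span (T '' Set.Iio i) → g ∈ Ideal.span (T '' Set.Iio i))
    (hw : ∑ j, q j * f j ∈ degreeLT σ R d) (hq : ∀ j, q j ∈ degreeLT σ R (d + 1 - δ j)) :
    ∃ h : Fin s → MvPolynomial σ R, ∑ j, h j * f j = ∑ j, q j * f j ∧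
      ∀ j, h j ∈ degreeLT σ R (d - δ j) := by
  suffices ∀ m : ℕ, ∀ q : Fin s → MvPolynomial σ R, ∑ j, q j * f j ∈ degreeLT σ R d →
      (∀ j, q j ∈ degreeLT σ R (d + 1 - δ j)) →
      (∀ j : Fin s, m ≤ j → q j ∈ degreeLT σ R (d - δ j)) →
      ∃ h : Fin s → MvPolynomial σ R, ∑ j, h j * f j = ∑ j, q j * f j ∧
        ∀ j, h j ∈ degreeLT σ R (d - δ j) from
    this s q hw hq fun j hj => absurd j.isLt (by omega)
  intro m
  induction m with
  | zero => exact fun q _ _ hstrict => ⟨q, rfl, fun j => hstrict j (Nat.zero_le _)⟩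
  | succ m ih =>
    intro q hw hq hstrict
    by_cases hm : m < s
    · obtain ⟨q', hsum, hq', hstrict'⟩ := exists_sum_mul_eq_lowerDegree_step (i := ⟨m, hm⟩)
        hT hfT (hreg _) hw hq fun j hj => hstrict j hj
      obtain ⟨h, hsum', hh⟩ := ih q' (hsum ▸ hw) hq' fun j hj => hstrict' j hj
      exact ⟨h, hsum'.trans hsum, hh⟩
    · exact ih q hw hq fun j hj => absurd j.isLt (by omega)

end MvPolynomial

theorem stmt_2_general {K : Type*} [Field K] {n s : ℕ}
    (f : Fin s → MvPolynomial (Fin n) K) (δ : Fin s → ℕ)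
    (hdeg : ∀ i, (f i).totalDegree = δ i)
    (hreg : ∀ i : Fin s, ∀ g : MvPolynomial (Fin n) K,
      g * topHom (f i) ∈ Ideal.span {p | ∃ j : Fin s, j < i ∧ p = topHom (f j)} →
      g ∈ Ideal.span {p | ∃ j : Fin s, j < i ∧ p = topHom (f j)})
    (d : ℕ) (w : MvPolynomial (Fin n) K) (q : Fin s → MvPolynomial (Fin n) K)
    (hw : w = ∑ i, q i * f i)
    (hwd : w = 0 ∨ w.totalDegree < d)
    (hq : ∀ i, q i = 0 ∨ (q i).totalDegree + δ i ≤ d) :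
    ∃ h : Fin s → MvPolynomial (Fin n) K,
      w = ∑ i, h i * f i ∧ ∀ i, h i = 0 ∨ (h i).totalDegree + δ i < d := by
  have hT : ∀ j, (topHom (f j)).IsHomogeneous (δ j) := fun j => by
    simpa only [topHom, hdeg] using homogeneousComponent_isHomogeneous (f j).totalDegree (f j)
  have hfT : ∀ j, f j - topHom (f j) ∈ degreeLT (Fin n) K (δ j) := fun j => by
    simpa only [topHom, hdeg] using sub_homogeneousComponent_totalDegree_mem_degreeLT (f j)
  have hspan : ∀ i : Fin s,
      {p | ∃ j : Fin s, j < i ∧ p = topHom (f j)} = (fun j => topHom (f j)) '' Set.Iio i :=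
    fun i => by ext; simp [eq_comm]
  obtain ⟨h, hsum, hh⟩ := exists_sum_mul_eq_lowerDegree hT hfT (fun i => hspan i ▸ hreg i)
    (hw ▸ mem_degreeLT.2 hwd) fun j => mem_degreeLT.2 ((hq j).imp_right (by omega))
  exact ⟨h, hw.trans hsum.symm, fun j => (mem_degreeLT.1 (hh j)).imp_right (by omega)⟩

/-- If the top-degree components of `f₁,…,f_s` form a regular sequence,
`w = q₁f₁+⋯+q_sf_s` with `deg w < d` and `deg qᵢ ≤ d − δᵢ` for all `i`, then
`w = h₁f₁+⋯+h_sf_s` with `deg hᵢ < d − δᵢ`. -/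
theorem stmt_2 {K : Type*} [Field K] {n s : ℕ}
    (f : Fin s → MvPolynomial (Fin n) K) (δ : Fin s → ℕ)
    (hf0 : ∀ i, f i ≠ 0) (hdeg : ∀ i, (f i).totalDegree = δ i)
    (hreg : ∀ i : Fin s, ∀ g : MvPolynomial (Fin n) K,
      g * topHom (f i) ∈ Ideal.span {p | ∃ j : Fin s, j < i ∧ p = topHom (f j)} →
      g ∈ Ideal.span {p | ∃ j : Fin s, j < i ∧ p = topHom (f j)})
    (d : ℕ) (w : MvPolynomial (Fin n) K) (q : Fin s → MvPolynomial (Fin n) K)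
    (hw : w = ∑ i, q i * f i)
    (hwd : w = 0 ∨ w.totalDegree < d)
    (hq : ∀ i, q i = 0 ∨ (q i).totalDegree + δ i ≤ d) :
    ∃ h : Fin s → MvPolynomial (Fin n) K,
      w = ∑ i, h i * f i ∧ ∀ i, h i = 0 ∨ (h i).totalDegree + δ i < d :=
  stmt_2_general f δ hdeg hreg d w q hw hwd hq
end

section
/- Let I ⊆ K[x₁,…,xₙ] be a zero-dimensional ideal and ≻ a monomial ordering such that the set of leading monomials LM(I) is stable. Fix ℓ ∈ {1,…,n} and let m be a monomial in K[x₁,…,x_{ℓ−1}] not in LM(I). Then there exists a minimal integer α ≥ 1 such that m·x_ℓ^α ∈ LM(I), and m·x_ℓ^α is the leading monomial of an element of the reduced ≻-Gröbner basis of I whose leading monomial lies in K[x₁,…,x_ℓ] but not in K[x₁,…,x_{ℓ−1}]. -/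
/-! Since `K[x]/I` is finite-dimensional, `x_ℓ` is algebraic modulo `I`, so some pure power of
`x_ℓ`, and with it some `m·x_ℓ^β`, lies in `LM(I)`; let `α` be the least such `β` (`α ≥ 1` as
`m ∉ LM(I)`). The reduced Gröbner basis has an element whose leading monomial `μ` divides
`m·x_ℓ^α`. Minimality of `α` forces `deg_{x_ℓ} μ = α`, and if `μ` had a smaller exponent than `m`
at some `x_j` with `j < ℓ`, stability would trade one `x_ℓ` of `μ` for `x_j`, giving an element
of `LM(I)` dividing `m·x_ℓ^(α-1)`. Hence `μ = m·x_ℓ^α`. -/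

open MvPolynomial

/-- A monomial `μ` is the leading monomial of `f` with respect to the strict order `lt`
on exponent vectors. -/
def IsLM {K : Type*} [Field K] {n : ℕ}
    (lt : (Fin n →₀ ℕ) → (Fin n →₀ ℕ) → Prop)
    (f : MvPolynomial (Fin n) K) (μ : Fin n →₀ ℕ) : Prop :=
  μ ∈ f.support ∧ ∀ ν ∈ f.support, ν = μ ∨ lt ν μ

/-- The set of leading monomials of nonzero elements of an ideal. -/
def LMset {K : Type*} [Field K] {n : ℕ}
    (lt : (Fin n →₀ ℕ) → (Fin n →₀ ℕ) → Prop)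
    (I : Ideal (MvPolynomial (Fin n) K)) : Set (Fin n →₀ ℕ) :=
  {μ | ∃ f ∈ I, IsLM lt f μ}

/-- A set of monomials is stable: if `m ∈ S` and `xᵢ ∣ m` then `(xⱼ·m)/xᵢ ∈ S`
for all `j < i`. -/
def StableSet {n : ℕ} (S : Set (Fin n →₀ ℕ)) : Prop :=
  ∀ μ ∈ S, ∀ i : Fin n, μ i ≠ 0 → ∀ j : Fin n, j < i →
    μ - Finsupp.single i 1 + Finsupp.single j 1 ∈ S

/-- `G` is the reduced Gröbner basis of `I` with respect to the monomial order `lt`. -/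
def IsReducedGB {K : Type*} [Field K] {n : ℕ}
    (lt : (Fin n →₀ ℕ) → (Fin n →₀ ℕ) → Prop)
    (I : Ideal (MvPolynomial (Fin n) K)) (G : Set (MvPolynomial (Fin n) K)) : Prop :=
  G.Finite ∧
  (∀ g ∈ G, g ≠ 0 ∧ g ∈ I) ∧
  (∀ f ∈ I, f ≠ 0 → ∃ g ∈ G, ∃ μ ν, IsLM lt g μ ∧ IsLM lt f ν ∧ μ ≤ ν) ∧
  (∀ g ∈ G, ∀ μ, IsLM lt g μ → g.coeff μ = 1) ∧
  (∀ g ∈ G, ∀ g' ∈ G, g ≠ g' → ∀ μ ν, IsLM lt g' μ → ν ∈ g.support → ¬ μ ≤ ν)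

section Polynomials

variable {K σ : Type*} [Field K]

theorem exists_ne_zero_aeval_X_mem (I : Ideal (MvPolynomial σ K))
    [FiniteDimensional K (MvPolynomial σ K ⧸ I)] (i : σ) :
    ∃ q : Polynomial K, q ≠ 0 ∧ Polynomial.aeval (X i) q ∈ I := by
  have hint : IsIntegral K (Ideal.Quotient.mkₐ K I (X i)) := Algebra.IsIntegral.isIntegral _
  refine ⟨minpoly K (Ideal.Quotient.mkₐ K I (X i)), minpoly.ne_zero hint, ?_⟩
  rw [← Ideal.Quotient.eq_zero_iff_mem, ← Ideal.Quotient.mkₐ_eq_mk K,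
    ← Polynomial.aeval_algHom_apply, minpoly.aeval]

theorem support_aeval_X_subset (q : Polynomial K) (i : σ) :
    ((Polynomial.aeval (X i : MvPolynomial σ K) q).support : Set (σ →₀ ℕ)) ⊆
      Set.range (Finsupp.single i) := by
  classical
  intro μ hμ
  rw [Polynomial.aeval_eq_sum_range] at hμ
  obtain ⟨k, -, hk⟩ := Finset.mem_biUnion.1 (support_sum hμ)
  rw [X_pow_eq_monomial, smul_monomial] at hk
  exact ⟨k, (Finset.mem_singleton.1 (support_monomial_subset hk)).symm⟩

end Polynomials

section LeadingMonomials

variable {K : Type*} [Field K] {n : ℕ} {lt : (Fin n →₀ ℕ) → (Fin n →₀ ℕ) → Prop}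

theorem exists_isLM (hlin : ∀ a b, a = b ∨ lt a b ∨ lt b a)
    (htrans : ∀ a b c, lt a b → lt b c → lt a c) (hirr : ∀ a, ¬ lt a a)
    {f : MvPolynomial (Fin n) K} (hf : f ≠ 0) : ∃ μ, IsLM lt f μ := by
  have : IsStrictOrder _ (flip lt) :=
    { irrefl := hirr, trans := fun a b c hab hbc => htrans c b a hbc hab }
  obtain ⟨μ₀, hμ₀⟩ := support_nonempty.2 hf
  obtain ⟨⟨μ, hμ⟩, -, hmax⟩ := (f.support.finite_toSet.wellFoundedOn (r := flip lt)).has_min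
    Set.univ ⟨⟨μ₀, hμ₀⟩, trivial⟩
  refine ⟨μ, hμ, fun ν hν => ?_⟩
  rcases hlin ν μ with h | h | h
  · exact Or.inl h
  · exact Or.inr h
  · exact absurd h (hmax ⟨ν, hν⟩ trivial)

theorem IsLM.unique (htrans : ∀ a b c, lt a b → lt b c → lt a c) (hirr : ∀ a, ¬ lt a a)
    {f : MvPolynomial (Fin n) K} {μ ν : Fin n →₀ ℕ}
    (hμ : IsLM lt f μ) (hν : IsLM lt f ν) : μ = ν := by
  rcases hμ.2 ν hν.1 with h | hνμ
  · exact h.symm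
  rcases hν.2 μ hμ.1 with h | hμν
  · exact h
  exact absurd (htrans _ _ _ hνμ hμν) (hirr ν)

theorem IsLM.ne_zero {f : MvPolynomial (Fin n) K} {μ : Fin n →₀ ℕ} (h : IsLM lt f μ) :
    f ≠ 0 := by
  rintro rfl
  simpa using h.1

theorem IsLM.monomial_mul (hadd : ∀ a b c, lt a b → lt (a + c) (b + c))
    {f : MvPolynomial (Fin n) K} {μ : Fin n →₀ ℕ} (h : IsLM lt f μ) (δ : Fin n →₀ ℕ) :
    IsLM lt (monomial δ 1 * f) (μ + δ) := by
  refine ⟨?_, fun ν hν => ?_⟩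
  · rw [mem_support_iff, add_comm μ δ, coeff_monomial_mul, one_mul]
    exact mem_support_iff.1 h.1
  · rw [mem_support_iff, coeff_monomial_mul'] at hν
    split_ifs at hν with hδν
    · obtain ⟨ν', rfl⟩ := le_iff_exists_add.1 hδν
      rw [add_tsub_cancel_left, one_mul] at hν
      rw [add_comm δ]
      rcases h.2 ν' (mem_support_iff.2 hν) with rfl | hlt
      · exact Or.inl rfl
      · exact Or.inr (hadd _ _ _ hlt)
    · exact absurd rfl hν

theorem isUpperSet_LMset (hadd : ∀ a b c, lt a b → lt (a + c) (b + c))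
    (I : Ideal (MvPolynomial (Fin n) K)) : IsUpperSet (LMset lt I) := by
  rintro μ ν hμν ⟨f, hfI, hf⟩
  obtain ⟨δ, rfl⟩ := le_iff_exists_add.1 hμν
  exact ⟨_, I.mul_mem_left _ hfI, hf.monomial_mul hadd δ⟩

theorem exists_single_mem_LMset (hlin : ∀ a b, a = b ∨ lt a b ∨ lt b a)
    (htrans : ∀ a b c, lt a b → lt b c → lt a c) (hirr : ∀ a, ¬ lt a a)
    (I : Ideal (MvPolynomial (Fin n) K)) [FiniteDimensional K (MvPolynomial (Fin n) K ⧸ I)]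
    (i : Fin n) : ∃ N, Finsupp.single i N ∈ LMset lt I := by
  obtain ⟨q, hq, hqI⟩ := exists_ne_zero_aeval_X_mem I i
  have hp : Polynomial.aeval (X i : MvPolynomial (Fin n) K) q ≠ 0 := fun h =>
    hq (transcendental_iff_injective.1 (transcendental_X K i) (h.trans (map_zero _).symm))
  obtain ⟨μ, hμ⟩ := exists_isLM hlin htrans hirr hp
  obtain ⟨N, rfl⟩ := support_aeval_X_subset q i hμ.1
  exact ⟨N, _, hqI, hμ⟩

theorem IsReducedGB.exists_isLM_le (htrans : ∀ a b c, lt a b → lt b c → lt a c)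
    (hirr : ∀ a, ¬ lt a a)
    {I : Ideal (MvPolynomial (Fin n) K)} {G : Set (MvPolynomial (Fin n) K)}
    (hG : IsReducedGB lt I G) {μ : Fin n →₀ ℕ} (hμ : μ ∈ LMset lt I) :
    ∃ g ∈ G, ∃ ν, IsLM lt g ν ∧ ν ∈ LMset lt I ∧ ν ≤ μ := by
  obtain ⟨f, hfI, hf⟩ := hμ
  obtain ⟨g, hgG, ν, μ', hgν, hfμ', hνμ'⟩ := hG.2.2.1 f hfI hf.ne_zero
  obtain rfl := hfμ'.unique htrans hirr hf
  exact ⟨g, hgG, ν, hgν, ⟨g, (hG.2.1 g hgG).2, hgν⟩, hνμ'⟩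

end LeadingMonomials

section StableSets

variable {n : ℕ} {S : Set (Fin n →₀ ℕ)} {ℓ : Fin n} {m μ : Fin n →₀ ℕ} {α : ℕ}

theorem le_apply_of_mem_of_le_add_single (hS : IsUpperSet S)
    (hmin : ∀ β < α, m + Finsupp.single ℓ β ∉ S) (hμ : μ ∈ S)
    (hle : μ ≤ m + Finsupp.single ℓ α) : α ≤ μ ℓ := by
  by_contra! h
  refine hmin (μ ℓ) h (hS (fun k => ?_) hμ)
  have hk := hle k
  simp only [Finsupp.add_apply, Finsupp.single_apply] at hk ⊢
  split_ifs at hk ⊢ with hℓk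
  · subst hℓk; omega
  · exact hk

theorem StableSet.apply_le_apply_of_mem_of_le_add_single (hstable : StableSet S)
    (hS : IsUpperSet S) (hmℓ : m ℓ = 0) (hmin : ∀ β < α, m + Finsupp.single ℓ β ∉ S) (hα : 0 < α)
    (hμ : μ ∈ S) (hle : μ ≤ m + Finsupp.single ℓ α) {j : Fin n} (hj : j < ℓ) : m j ≤ μ j := by
  by_contra! h
  have hμℓ := le_apply_of_mem_of_le_add_single hS hmin hμ hle
  have hshift := hstable μ hμ ℓ (by omega) j hj
  refine hmin (α - 1) (by omega) (hS (fun k => ?_) hshift)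
  have hk := hle k
  simp only [Finsupp.add_apply, Finsupp.tsub_apply, Finsupp.single_apply] at hk ⊢
  split_ifs at hk ⊢ <;> subst_vars <;> omega

theorem StableSet.eq_add_single_of_mem_of_le (hstable : StableSet S) (hS : IsUpperSet S)
    (hm : ∀ k, ℓ ≤ k → m k = 0) (hmin : ∀ β < α, m + Finsupp.single ℓ β ∉ S) (hα : 0 < α)
    (hμ : μ ∈ S) (hle : μ ≤ m + Finsupp.single ℓ α) : μ = m + Finsupp.single ℓ α := by
  refine le_antisymm hle fun k => ?_
  rcases lt_trichotomy k ℓ with hk | rfl | hk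
  · simpa [Finsupp.single_apply, hk.ne'] using
      hstable.apply_le_apply_of_mem_of_le_add_single hS (hm ℓ le_rfl) hmin hα hμ hle hk
  · simpa [hm k le_rfl] using le_apply_of_mem_of_le_add_single hS hmin hμ hle
  · simp [hk.ne, hm k hk.le]

end StableSets

theorem stmt_3_general {K : Type*} [Field K] {n : ℕ}
    (lt : (Fin n →₀ ℕ) → (Fin n →₀ ℕ) → Prop)
    (hlin : ∀ a b, a = b ∨ lt a b ∨ lt b a)
    (htrans : ∀ a b c, lt a b → lt b c → lt a c)
    (hirr : ∀ a, ¬ lt a a)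
    (hadd : ∀ a b c, lt a b → lt (a + c) (b + c))
    (I : Ideal (MvPolynomial (Fin n) K))
    (hI : FiniteDimensional K (MvPolynomial (Fin n) K ⧸ I))
    (hstable : StableSet (LMset lt I))
    (G : Set (MvPolynomial (Fin n) K)) (hG : IsReducedGB lt I G)
    (ℓ : Fin n) (m : Fin n →₀ ℕ)
    (hm1 : ∀ k : Fin n, ℓ ≤ k → m k = 0)
    (hm2 : m ∉ LMset lt I) :
    ∃ α : ℕ, 1 ≤ α ∧
      (m + Finsupp.single ℓ α) ∈ LMset lt I ∧
      (∀ β : ℕ, β < α → m + Finsupp.single ℓ β ∉ LMset lt I) ∧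
      ∃ g ∈ G, IsLM lt g (m + Finsupp.single ℓ α) ∧
        (∀ k : Fin n, ℓ < k → (m + Finsupp.single ℓ α) k = 0) ∧
        (m + Finsupp.single ℓ α) ℓ ≠ 0 := by
  classical
  have hS := isUpperSet_LMset hadd I
  obtain ⟨N, hN⟩ := exists_single_mem_LMset hlin htrans hirr I ℓ
  have hex : ∃ β, m + Finsupp.single ℓ β ∈ LMset lt I := ⟨N, hS le_add_self hN⟩
  have hmin : ∀ β < Nat.find hex, m + Finsupp.single ℓ β ∉ LMset lt I :=
    fun _ => Nat.find_min hex
  have hα : 0 < Nat.find hex :=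
    Nat.pos_of_ne_zero fun h => hm2 (by simpa [h] using Nat.find_spec hex)
  obtain ⟨g, hgG, μ, hgμ, hμ, hμle⟩ := hG.exists_isLM_le htrans hirr (Nat.find_spec hex)
  obtain rfl := hstable.eq_add_single_of_mem_of_le hS hm1 hmin hα hμ hμle
  refine ⟨_, hα, Nat.find_spec hex, hmin, g, hgG, hgμ, fun k hk => ?_, ?_⟩
  · simp [hk.ne, hm1 k hk.le]
  · simpa [hm1 ℓ le_rfl] using hα.ne'

/-- for a zero-dimensional ideal with stable leading monomial set,
any standard monomial `m` in the first `ℓ−1` variables admits a minimal `α ≥ 1`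
with `m·x_ℓ^α ∈ LM(I)`, and `m·x_ℓ^α` is the leading monomial of a reduced Gröbner
basis element lying in `K[x₁,…,x_ℓ]` but not in `K[x₁,…,x_{ℓ−1}]`. -/
theorem stmt_3 {K : Type*} [Field K] {n : ℕ}
    (lt : (Fin n →₀ ℕ) → (Fin n →₀ ℕ) → Prop)
    (hlin : ∀ a b, a = b ∨ lt a b ∨ lt b a)
    (htrans : ∀ a b c, lt a b → lt b c → lt a c)
    (hirr : ∀ a, ¬ lt a a)
    (hadd : ∀ a b c, lt a b → lt (a + c) (b + c))
    (hzero : ∀ a : Fin n →₀ ℕ, a ≠ 0 → lt 0 a)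
    (I : Ideal (MvPolynomial (Fin n) K))
    (hI : FiniteDimensional K (MvPolynomial (Fin n) K ⧸ I))
    (hstable : StableSet (LMset lt I))
    (G : Set (MvPolynomial (Fin n) K)) (hG : IsReducedGB lt I G)
    (ℓ : Fin n) (m : Fin n →₀ ℕ)
    (hm1 : ∀ k : Fin n, ℓ ≤ k → m k = 0)
    (hm2 : m ∉ LMset lt I) :
    ∃ α : ℕ, 1 ≤ α ∧
      (m + Finsupp.single ℓ α) ∈ LMset lt I ∧
      (∀ β : ℕ, β < α → m + Finsupp.single ℓ β ∉ LMset lt I) ∧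
      ∃ g ∈ G, IsLM lt g (m + Finsupp.single ℓ α) ∧
        (∀ k : Fin n, ℓ < k → (m + Finsupp.single ℓ α) k = 0) ∧
        (m + Finsupp.single ℓ α) ℓ ≠ 0 :=
  stmt_3_general lt hlin htrans hirr hadd I hI hstable G hG ℓ m hm1 hm2
end

section
/- The K-module of syzygies of a family of monomials t₁,…,t_r — that is, the set of tuples (p₁,…,p_r) of polynomials with Σ pᵢtᵢ = 0 — is generated by the Taylor syzygies S_{ij} = (lcm(tᵢ,tⱼ)/tᵢ)·eᵢ − (lcm(tᵢ,tⱼ)/tⱼ)·eⱼ for 1 ≤ i < j ≤ r. -/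
/-! Modulo the span of the Taylor syzygies, the class of `X^(d - tₖ) eₖ` does not depend on the
choice of `k` with `tₖ ≤ d`: for two such indices the difference is `X^(d - lcm)` times `±S_{kl}`.
So the quotient map factors, `R`-linearly, through `p ↦ Σ pₖ X^tₖ`, by sending `X^d` to this common
class; in particular every syzygy vanishes in the quotient. -/

open MvPolynomial

noncomputable section TaylorSyzygies

variable (R : Type*) [CommRing R] {σ ι : Type*} (t : ι → σ →₀ ℕ)

def monomialSyzygyMap [Fintype ι] :
    (ι → MvPolynomial σ R) →ₗ[MvPolynomial σ R] MvPolynomial σ R :=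
  Fintype.linearCombination _ fun i => monomial (t i) 1

variable [DecidableEq ι]

theorem monomialSyzygyMap_single_monomial [Fintype ι] (i : ι) (m : σ →₀ ℕ) (c : R) :
    monomialSyzygyMap R t (Pi.single i (monomial m c)) = monomial (m + t i) c := by
  simp [monomialSyzygyMap, Fintype.linearCombination_apply_single, monomial_mul]

def taylorSyzygy (i j : ι) : ι → MvPolynomial σ R := fun k =>
  if k = i then monomial ((t i ⊔ t j) - t i) 1
  else if k = j then -monomial ((t i ⊔ t j) - t j) 1
  else 0

theorem monomial_smul_taylorSyzygy {i j : ι} (hij : i ≠ j) {d : σ →₀ ℕ} (hd : t i ⊔ t j ≤ d) :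
    monomial (d - (t i ⊔ t j)) (1 : R) • taylorSyzygy R t i j =
      Pi.single i (monomial (d - t i) 1) - Pi.single j (monomial (d - t j) 1) := by
  funext k
  by_cases hki : k = i
  · subst hki
    simp [taylorSyzygy, hij, monomial_mul, tsub_add_tsub_cancel hd le_sup_left]
  by_cases hkj : k = j
  · subst hkj
    simp [taylorSyzygy, hki, monomial_mul, tsub_add_tsub_cancel hd le_sup_right]
  · simp [taylorSyzygy, hki, hkj]

variable [LinearOrder ι]

def taylorSpan : Submodule (MvPolynomial σ R) (ι → MvPolynomial σ R) :=
  Submodule.span _ {s | ∃ i j, i < j ∧ s = taylorSyzygy R t i j}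

theorem single_sub_single_mem_taylorSpan {i j : ι} {d : σ →₀ ℕ} (hi : t i ≤ d) (hj : t j ≤ d) :
    Pi.single i (monomial (d - t i) (1 : R)) - Pi.single j (monomial (d - t j) 1) ∈
      taylorSpan R t := by
  rcases lt_trichotomy i j with hij | rfl | hji
  · rw [← monomial_smul_taylorSyzygy R t hij.ne (sup_le hi hj)]
    exact Submodule.smul_mem _ _ (Submodule.subset_span ⟨i, j, hij, rfl⟩)
  · rw [sub_self]
    exact zero_mem _
  · rw [← neg_sub, ← monomial_smul_taylorSyzygy R t hji.ne (sup_le hj hi)]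
    exact neg_mem (Submodule.smul_mem _ _ (Submodule.subset_span ⟨j, i, hji, rfl⟩))

/- The value `0` when no `tₖ` divides `d` is never seen: such `X^d` do not occur in the image of
`monomialSyzygyMap`. -/
open Classical in
def taylorClass (d : σ →₀ ℕ) : (ι → MvPolynomial σ R) ⧸ taylorSpan R t :=
  if h : ∃ k, t k ≤ d then Submodule.Quotient.mk (Pi.single h.choose (monomial (d - t h.choose) 1))
  else 0

theorem taylorClass_eq {k : ι} {d : σ →₀ ℕ} (hk : t k ≤ d) :
    taylorClass R t d = Submodule.Quotient.mk (Pi.single k (monomial (d - t k) 1)) := by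
  have h : ∃ k, t k ≤ d := ⟨k, hk⟩
  rw [taylorClass, dif_pos h, Submodule.Quotient.eq]
  exact single_sub_single_mem_taylorSpan R t h.choose_spec hk

variable [Fintype ι]

theorem taylorSpan_le_ker : taylorSpan R t ≤ LinearMap.ker (monomialSyzygyMap R t) := by
  rw [taylorSpan, Submodule.span_le]
  rintro _ ⟨i, j, hij, rfl⟩
  have h := monomial_smul_taylorSyzygy R t hij.ne le_rfl
  rw [tsub_self, ← one_def, one_smul] at h
  simp [h, monomialSyzygyMap_single_monomial, tsub_add_cancel_of_le, le_sup_left, le_sup_right]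

theorem mkQ_taylorSpan_eq :
    (taylorSpan R t).mkQ.restrictScalars R =
      (basisMonomials σ R).constr R (taylorClass R t) ∘ₗ
        (monomialSyzygyMap R t).restrictScalars R := by
  refine LinearMap.pi_ext' fun k => (basisMonomials σ R).ext fun m => ?_
  have hbasis : ∀ d, monomial d (1 : R) = basisMonomials σ R d := fun d => by
    rw [coe_basisMonomials]
  simp only [LinearMap.comp_apply, LinearMap.coe_single, LinearMap.restrictScalars_apply,
    Submodule.mkQ_apply, ← hbasis, monomialSyzygyMap_single_monomial]
  rw [hbasis (m + t k), Module.Basis.constr_basis, taylorClass_eq R t le_add_self,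
    add_tsub_cancel_right]

theorem ker_monomialSyzygyMap : LinearMap.ker (monomialSyzygyMap R t) = taylorSpan R t := by
  refine le_antisymm (fun p hp => ?_) (taylorSpan_le_ker R t)
  rw [← Submodule.Quotient.mk_eq_zero]
  simpa [LinearMap.mem_ker.mp hp] using LinearMap.congr_fun (mkQ_taylorSpan_eq R t) p

end TaylorSyzygies

/-- the module of syzygies of the monomials `t₁,…,t_r` — the tuples
`(p₁,…,p_r)` of polynomials with `Σ pᵢ·tᵢ = 0` — is generated over `K[x₁,…,xₙ]` by the
Taylor syzygies `S_{ij} = (lcm(tᵢ,tⱼ)/tᵢ)·eᵢ − (lcm(tᵢ,tⱼ)/tⱼ)·eⱼ` for `i < j`. -/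
theorem stmt_6 {K : Type*} [Field K] {n r : ℕ} (t : Fin r → (Fin n →₀ ℕ)) :
    {p : Fin r → MvPolynomial (Fin n) K |
        ∑ i, p i * MvPolynomial.monomial (t i) (1 : K) = 0}
      = ↑(Submodule.span (MvPolynomial (Fin n) K)
          {s : Fin r → MvPolynomial (Fin n) K |
            ∃ i j : Fin r, i < j ∧
              s = fun k =>
                if k = i then MvPolynomial.monomial ((t i ⊔ t j) - t i) (1 : K)
                else if k = j then -(MvPolynomial.monomial ((t i ⊔ t j) - t j) (1 : K))
                else 0}) := by
  show _ = ((taylorSpan K t : Submodule _ _) : Set (Fin r → MvPolynomial (Fin n) K))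
  rw [← ker_monomialSyzygyMap]
  ext p
  simp [monomialSyzygyMap, Fintype.linearCombination_apply]
end

section
/- Let f₁,…,f_s be homogeneous polynomials of degree δ in K[x₁,…,xₙ], let I = ⟨f₁,…,f_s⟩, and for j ∈ {1,…,n} let φ_j(f) denote the polynomial obtained from f by setting x_{j+1} = ⋯ = xₙ = 0. Then for any degree d and any j, the monomials of degree d in K[x₁,…,x_j] outside LM_grevlex(I) coincide with the monomials of degree d in K[x₁,…,x_j] outside LM_grevlex(⟨φ_j(f₁),…,φ_j(f_s)⟩), the latter ideal being taken in K[x₁,…,x_j]. -/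
open MvPolynomial

/-- Total degree of an exponent vector. -/
def expDeg {n : ℕ} (m : Fin n →₀ ℕ) : ℕ := m.sum fun _ e => e

/-- Graded reverse lexicographic strict order with `x₁ ≻ ⋯ ≻ xₙ`: `a ≺ b` iff
`deg a < deg b`, or the degrees agree and at the last index where they differ `a` has the
larger exponent. -/
def GrevlexLt {n : ℕ} (a b : Fin n →₀ ℕ) : Prop :=
  expDeg a < expDeg b ∨
    (expDeg a = expDeg b ∧ ∃ i : Fin n, b i < a i ∧ ∀ j : Fin n, i < j → a j = b j)

/-- The truncation `φ_j` setting the variables `x_{j+1},…,xₙ` to `0`, viewed as a map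
into `K[x₁,…,x_j]`. -/
noncomputable def truncMap (K : Type*) [Field K] {n : ℕ} (j : ℕ) (hj : j ≤ n) :
    MvPolynomial (Fin n) K →ₐ[K] MvPolynomial (Fin j) K :=
  MvPolynomial.aeval (fun k : Fin n =>
    if h : (k : ℕ) < j then MvPolynomial.X ⟨(k : ℕ), h⟩ else 0)

/-!
The coefficient of `φ_j(F)` at a monomial `m` of `K[x₁,…,x_j]` is the coefficient of `F` at `m`,
and grevlex on `K[x₁,…,x_j]` is the restriction of grevlex on `K[x₁,…,xₙ]`; hence `φ_j` sends an
element of `I` with leading monomial `m` to an element of `J = φ_j(I)` with the same leading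
monomial. Conversely, lift `g ∈ J` with leading monomial `m` to `F ∈ I` (`φ_j` is split by the
inclusion) and keep its homogeneous component of degree `deg m`, which lies in `I` because `I` is
homogeneous. Its monomials inside `K[x₁,…,x_j]` are those of `g`, and in grevlex every other
monomial of that degree, involving some of `x_{j+1},…,xₙ`, is smaller than `m`. So the leading
monomial is still `m`.
-/

lemma expDeg_eq_degree {n : ℕ} (m : Fin n →₀ ℕ) : expDeg m = m.degree := rfl

lemma truncMap_eq_killCompl (K : Type*) [Field K] {n j : ℕ} (hj : j ≤ n) :
    truncMap K j hj = killCompl (Fin.castLE_injective hj) := by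
  refine algHom_ext fun k => ?_
  by_cases hk : (k : ℕ) < j
  · have hrange : k ∈ Set.range (Fin.castLE hj) := ⟨⟨k, hk⟩, rfl⟩
    simp only [truncMap, killCompl, aeval_X, dif_pos hk, dif_pos hrange]
    congr 1
    exact (Equiv.ofInjective_symm_apply (Fin.castLE_injective hj) ⟨k, hk⟩).symm
  · have hrange : k ∉ Set.range (Fin.castLE hj) := by simpa [Fin.range_castLE] using hk
    simp only [truncMap, killCompl, aeval_X, dif_neg hk, dif_neg hrange]

lemma truncMap_surjective (K : Type*) [Field K] {n j : ℕ} (hj : j ≤ n) :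
    Function.Surjective (truncMap K j hj) := fun p =>
  ⟨rename (Fin.castLE hj) p, by rw [truncMap_eq_killCompl, killCompl_rename_app]⟩

section Grevlex

variable {n j : ℕ} (hj : j ≤ n)

lemma mapDomain_castLE_apply_of_le (a : Fin j →₀ ℕ) {k : Fin n} (hk : j ≤ k) :
    Finsupp.mapDomain (Fin.castLE hj) a k = 0 :=
  Finsupp.mapDomain_of_notMem_range _ _ (by simpa [Fin.range_castLE] using hk)

lemma grevlexLt_mapDomain_castLE_iff (a b : Fin j →₀ ℕ) :
    GrevlexLt (Finsupp.mapDomain (Fin.castLE hj) a) (Finsupp.mapDomain (Fin.castLE hj) b) ↔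
      GrevlexLt a b := by
  have happly (c : Fin j →₀ ℕ) (i : Fin j) :
      Finsupp.mapDomain (Fin.castLE hj) c (Fin.castLE hj i) = c i :=
    Finsupp.mapDomain_apply (Fin.castLE_injective hj) c i
  simp only [GrevlexLt, expDeg_eq_degree, Finsupp.degree_mapDomain]
  refine or_congr Iff.rfl (and_congr Iff.rfl ⟨?_, ?_⟩)
  · rintro ⟨i, hlt, htail⟩
    have hij : (i : ℕ) < j := by
      by_contra! hji
      simp [mapDomain_castLE_apply_of_le hj _ hji] at hlt
    rw [show i = Fin.castLE hj ⟨i, hij⟩ from rfl, happly, happly] at hlt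
    refine ⟨⟨i, hij⟩, hlt, fun l hl => ?_⟩
    simpa only [happly] using htail (Fin.castLE hj l) (Fin.lt_def.2 hl)
  · rintro ⟨i, hlt, htail⟩
    refine ⟨Fin.castLE hj i, by simpa only [happly] using hlt, fun l hl => ?_⟩
    by_cases hlj : (l : ℕ) < j
    · rw [show l = Fin.castLE hj ⟨l, hlj⟩ from rfl, happly, happly]
      exact htail ⟨l, hlj⟩ hl
    · simp only [mapDomain_castLE_apply_of_le hj _ (not_lt.1 hlj)]

lemma grevlexLt_mapDomain_castLE_of_notMem_range {ν : Fin n →₀ ℕ} (a : Fin j →₀ ℕ)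
    (hdeg : expDeg ν = expDeg a) {k : Fin n} (hk : k ∈ ν.support)
    (hk_range : k ∉ Set.range (Fin.castLE hj)) :
    GrevlexLt ν (Finsupp.mapDomain (Fin.castLE hj) a) := by
  have hjk : j ≤ (k : ℕ) := by simpa [Fin.range_castLE] using hk_range
  -- the last variable occurring in `ν` lies beyond `x_j`, where `a` has exponent `0`
  set i := ν.support.max' ⟨k, hk⟩
  have hki : k ≤ i := ν.support.le_max' k hk
  refine Or.inr ⟨by rw [hdeg, expDeg_eq_degree, expDeg_eq_degree, Finsupp.degree_mapDomain], i,
    ?_, fun l hil => ?_⟩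
  · rw [mapDomain_castLE_apply_of_le hj a (hjk.trans hki)]
    exact Nat.pos_of_ne_zero (Finsupp.mem_support_iff.1 (ν.support.max'_mem _))
  · rw [mapDomain_castLE_apply_of_le hj a (hjk.trans (hki.trans hil.le))]
    by_contra hνl
    exact (ν.support.le_max' l (Finsupp.mem_support_iff.2 hνl)).not_gt hil

end Grevlex

attribute [local instance] MvPolynomial.gradedAlgebra

section LeadingMonomial

variable {K : Type*} [Field K] {n j : ℕ} (hj : j ≤ n)

lemma isLM_truncMap {F : MvPolynomial (Fin n) K} {m : Fin j →₀ ℕ}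
    (h : IsLM GrevlexLt F (Finsupp.mapDomain (Fin.castLE hj) m)) :
    IsLM GrevlexLt (truncMap K j hj F) m := by
  simp only [IsLM, truncMap_eq_killCompl, support_killCompl, Finset.mem_preimage] at h ⊢
  refine ⟨h.1, fun ν hν => ?_⟩
  rcases h.2 _ hν with heq | hlt
  · exact Or.inl (Finsupp.mapDomain_injective (Fin.castLE_injective hj) heq)
  · exact Or.inr ((grevlexLt_mapDomain_castLE_iff hj ν m).1 hlt)

lemma isLM_homogeneousComponent_of_isLM_truncMap {F : MvPolynomial (Fin n) K}
    {m : Fin j →₀ ℕ} (h : IsLM GrevlexLt (truncMap K j hj F) m) :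
    IsLM GrevlexLt (homogeneousComponent (expDeg m) F) (Finsupp.mapDomain (Fin.castLE hj) m) := by
  simp only [IsLM, truncMap_eq_killCompl, support_killCompl, Finset.mem_preimage] at h
  simp only [IsLM, support_homogeneousComponent, Finset.mem_filter, Finsupp.degree_mapDomain]
  refine ⟨⟨h.1, rfl⟩, fun ν ⟨hνF, hνdeg⟩ => ?_⟩
  by_cases hν : ↑ν.support ⊆ Set.range (Fin.castLE hj)
  · rw [← Finsupp.mapDomain_comapDomain _ (Fin.castLE_injective hj) ν hν] at hνF ⊢
    rcases h.2 _ hνF with heq | hlt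
    · exact Or.inl (congrArg _ heq)
    · exact Or.inr ((grevlexLt_mapDomain_castLE_iff hj _ m).2 hlt)
  · obtain ⟨k, hk, hk_range⟩ := Set.not_subset.1 hν
    exact Or.inr (grevlexLt_mapDomain_castLE_of_notMem_range hj m hνdeg hk hk_range)

theorem mem_LMset_grevlex_map_truncMap_iff {I : Ideal (MvPolynomial (Fin n) K)}
    (hI : I.IsHomogeneous (homogeneousSubmodule (Fin n) K)) (m : Fin j →₀ ℕ) :
    m ∈ LMset GrevlexLt (I.map (truncMap K j hj)) ↔
      Finsupp.mapDomain (Fin.castLE hj) m ∈ LMset GrevlexLt I := by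
  constructor
  · rintro ⟨g, hg, hgm⟩
    obtain ⟨F, hF, rfl⟩ := (Ideal.mem_map_iff_of_surjective _ (truncMap_surjective K hj)).1 hg
    exact ⟨_, homogeneousComponent_mem_of_mem hI hF _,
      isLM_homogeneousComponent_of_isLM_truncMap hj hgm⟩
  · rintro ⟨F, hF, hFm⟩
    exact ⟨_, Ideal.mem_map_of_mem _ hF, isLM_truncMap hj hFm⟩

end LeadingMonomial

theorem stmt_7_general {K : Type*} [Field K] {n s : ℕ}
    (f : Fin s → MvPolynomial (Fin n) K) (δ : ℕ)
    (hf : ∀ i, (f i).IsHomogeneous δ)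
    (j : ℕ) (hj : j ≤ n)
    (m : Fin j →₀ ℕ) :
    Finsupp.mapDomain (Fin.castLE hj) m ∉
        LMset (GrevlexLt (n := n)) (Ideal.span (Set.range f))
      ↔ m ∉ LMset (GrevlexLt (n := j))
          (Ideal.span (Set.range fun i => truncMap K j hj (f i))) := by
  have hI : (Ideal.span (Set.range f)).IsHomogeneous (homogeneousSubmodule (Fin n) K) :=
    Ideal.homogeneous_span _ _ (by rintro _ ⟨i, rfl⟩; exact ⟨δ, hf i⟩)
  rw [not_iff_not, ← mem_LMset_grevlex_map_truncMap_iff hj hI, Ideal.map_span, ← Set.range_comp]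
  rfl

/-- for homogeneous `f₁,…,f_s` of degree `δ` and any degree `d`, the monomials
of degree `d` in `K[x₁,…,x_j]` outside `LM_grevlex(⟨f₁,…,f_s⟩)` coincide with the monomials of
degree `d` outside `LM_grevlex(⟨φ_j(f₁),…,φ_j(f_s)⟩)`, the latter ideal taken in
`K[x₁,…,x_j]`. -/
theorem stmt_7 {K : Type*} [Field K] {n s : ℕ}
    (f : Fin s → MvPolynomial (Fin n) K) (δ : ℕ)
    (hf : ∀ i, (f i).IsHomogeneous δ)
    (j : ℕ) (hj : j ≤ n) (d : ℕ)
    (m : Fin j →₀ ℕ) (hm : expDeg m = d) :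
    Finsupp.mapDomain (Fin.castLE hj) m ∉
        LMset (GrevlexLt (n := n)) (Ideal.span (Set.range f))
      ↔ m ∉ LMset (GrevlexLt (n := j))
          (Ideal.span (Set.range fun i => truncMap K j hj (f i))) :=
  stmt_7_general f δ hf j hj m
end

section
/- Let (f₁,…,fₙ) be a regular sequence of homogeneous polynomials in K[x₁,…,xₙ] with deg fᵢ = δᵢ. Then the number of monomials outside the leading-monomial ideal of ⟨f₁,…,fₙ⟩ (i.e., dim_K K[x₁,…,xₙ]/⟨f₁,…,fₙ⟩) equals δ₁δ₂⋯δₙ. -/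
/-!
Let `A = K[x₁,…,xₙ]` and `H_I(z) = ∑_d dim_K (A/I)_d z^d` for homogeneous `I`. If `f` is homogeneous
of degree `δ` and a nonzerodivisor modulo `I`, multiplication by `f` embeds `(A/I)_{d-δ}` into
`(A/I)_d` with cokernel `(A/(I + (f)))_d`, so `H_{I+(f)} = (1 - z^δ) H_I`. Along a regular sequence
this gives `H_{(f₁,…,fₙ)} = ∏ᵢ (1 - z^{δᵢ}) · H_0`. Applied to the regular sequence `x₁,…,xₙ`, whose
quotient is `K`, it gives `(1 - z)ⁿ H_0 = 1`; hence `H_{(f₁,…,fₙ)} = ∏ᵢ (1 + z + ⋯ + z^{δᵢ-1})` is a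
polynomial, and the dimension of the quotient is its value `∏ᵢ δᵢ` at `z = 1`.
-/

open MvPolynomial DirectSum Module

theorem Submodule.finrank_map_add_finrank_of_inf_ker_eq {K M N : Type*} [DivisionRing K]
    [AddCommGroup M] [Module K M] [AddCommGroup N] [Module K N] {V W : Submodule K M}
    [FiniteDimensional K V] (φ : M →ₗ[K] N) (h : V ⊓ LinearMap.ker φ = W) :
    finrank K (V.map φ) + finrank K W = finrank K V := by
  have hWV : W ≤ V := h ▸ inf_le_left
  rw [← LinearMap.range_domRestrict, ← LinearMap.finrank_range_add_finrank_ker (φ.domRestrict V),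
    ← (Submodule.comapSubtypeEquivOfLe hWV).finrank_eq, ← h, LinearMap.ker_domRestrict,
    Submodule.comap_inf, Submodule.comap_subtype_self, top_inf_eq]

namespace Ideal

variable {K A : Type*} [Field K] [CommRing A] [Algebra K A] (𝒜 : ℕ → Submodule K A)

noncomputable def quotientGrade (I : Ideal A) (d : ℕ) : Submodule K (A ⧸ I) :=
  (𝒜 d).map (Quotient.mkₐ K I).toLinearMap

noncomputable def hilbertFunction (I : Ideal A) (d : ℕ) : ℕ :=
  finrank K (I.quotientGrade 𝒜 d)

noncomputable def hilbertSeries (I : Ideal A) : PowerSeries ℤ :=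
  PowerSeries.mk fun d => (I.hilbertFunction 𝒜 d : ℤ)

variable {𝒜}

instance [∀ d, FiniteDimensional K (𝒜 d)] (I : Ideal A) (d : ℕ) :
    FiniteDimensional K (I.quotientGrade 𝒜 d) :=
  Module.Finite.map _ _

lemma quotientGrade_eq_map_factorₐ {I J : Ideal A} (h : I ≤ J) (d : ℕ) :
    J.quotientGrade 𝒜 d = (I.quotientGrade 𝒜 d).map (Quotient.factorₐ K h).toLinearMap := by
  rw [quotientGrade, quotientGrade, ← Submodule.map_comp]
  rfl

variable [GradedAlgebra 𝒜] {I : Ideal A} {f : A} {δ : ℕ}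

lemma exists_sub_mul_mem_of_mem_sup_span_singleton (hI : I.IsHomogeneous 𝒜) (hf : f ∈ 𝒜 δ)
    {d : ℕ} {g : A} (hg : g ∈ 𝒜 (d + δ)) (hgJ : g ∈ I ⊔ span {f}) :
    ∃ c ∈ 𝒜 d, g - c * f ∈ I := by
  obtain ⟨z, hz, y, hy, rfl⟩ := Submodule.mem_sup.mp hgJ
  obtain ⟨a, rfl⟩ := mem_span_singleton'.mp hy
  refine ⟨decompose 𝒜 a d, SetLike.coe_mem _, ?_⟩
  have hsplit : z + a * f = decompose 𝒜 z (d + δ) + decompose 𝒜 a d * f := by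
    rw [← decompose_of_mem_same 𝒜 hg, decompose_add, DirectSum.add_apply, Submodule.coe_add,
      coe_decompose_mul_add_of_right_mem 𝒜 hf]
  rw [hsplit, add_sub_cancel_right]
  exact hI (d + δ) hz

lemma mem_of_mem_sup_span_singleton_of_lt (hI : I.IsHomogeneous 𝒜) (hf : f ∈ 𝒜 δ)
    {d : ℕ} {g : A} (hg : g ∈ 𝒜 d) (hd : d < δ) (hgJ : g ∈ I ⊔ span {f}) : g ∈ I := by
  obtain ⟨z, hz, y, hy, rfl⟩ := Submodule.mem_sup.mp hgJ
  obtain ⟨a, rfl⟩ := mem_span_singleton'.mp hy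
  rw [← decompose_of_mem_same 𝒜 hg, decompose_add, DirectSum.add_apply, Submodule.coe_add,
    coe_decompose_mul_of_right_mem_of_not_le 𝒜 hf hd.not_ge, add_zero]
  exact hI d hz

lemma quotientGrade_add_inf_ker_eq (hI : I.IsHomogeneous 𝒜) (hf : f ∈ 𝒜 δ) (d : ℕ) :
    I.quotientGrade 𝒜 (d + δ) ⊓
        LinearMap.ker (Quotient.factorₐ K (le_sup_left : I ≤ I ⊔ span {f})).toLinearMap
      = (I.quotientGrade 𝒜 d).map (LinearMap.mulLeft K (Quotient.mk I f)) := by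
  apply le_antisymm
  · rintro _ ⟨⟨g, hg, rfl⟩, hker⟩
    obtain ⟨c, hc, hgc⟩ := exists_sub_mul_mem_of_mem_sup_span_singleton hI hf hg
      (Quotient.eq_zero_iff_mem.mp hker)
    refine ⟨Quotient.mk I c, ⟨c, hc, rfl⟩, ?_⟩
    rw [LinearMap.mulLeft_apply, ← map_mul, mul_comm]
    exact (Quotient.eq.mpr hgc).symm
  · rintro _ ⟨_, ⟨c, hc, rfl⟩, rfl⟩
    refine ⟨⟨f * c, add_comm d δ ▸ SetLike.mul_mem_graded hf hc, rfl⟩, ?_⟩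
    exact Quotient.eq_zero_iff_mem.mpr
      (mul_mem_right _ _ (mem_sup_right (mem_span_singleton_self f)))

lemma quotientGrade_inf_ker_eq_bot (hI : I.IsHomogeneous 𝒜) (hf : f ∈ 𝒜 δ) {d : ℕ} (hd : d < δ) :
    I.quotientGrade 𝒜 d ⊓
        LinearMap.ker (Quotient.factorₐ K (le_sup_left : I ≤ I ⊔ span {f})).toLinearMap = ⊥ := by
  rw [eq_bot_iff]
  rintro _ ⟨⟨g, hg, rfl⟩, hker⟩
  exact Quotient.eq_zero_iff_mem.mpr
    (mem_of_mem_sup_span_singleton_of_lt hI hf hg hd (Quotient.eq_zero_iff_mem.mp hker))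

lemma iSup_quotientGrade (I : Ideal A) : ⨆ d, I.quotientGrade 𝒜 d = ⊤ := by
  simp only [quotientGrade, ← Submodule.map_iSup,
    (Decomposition.isInternal 𝒜).submodule_iSup_eq_top, Submodule.map_top]
  exact LinearMap.range_eq_top.mpr (Quotient.mkₐ_surjective K I)

lemma IsHomogeneous.mem_of_sum_mem (hI : I.IsHomogeneous 𝒜) {ι : Type*} [Fintype ι]
    {deg : ι → ℕ} (hdeg : Function.Injective deg) {g : ι → A} (hg : ∀ i, g i ∈ 𝒜 (deg i))
    (hsum : ∑ i, g i ∈ I) (i : ι) : g i ∈ I := by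
  have := hI (deg i) hsum
  rwa [decompose_sum, DFinsupp.finsetSum_apply, AddSubmonoidClass.coe_finsetSum,
    Finset.sum_eq_single i (fun j _ hji => decompose_of_mem_ne 𝒜 (hg j) (hdeg.ne hji))
      (absurd (Finset.mem_univ i)), decompose_of_mem_same 𝒜 (hg i)] at this

variable [∀ d, FiniteDimensional K (𝒜 d)]

theorem hilbertFunction_sup_span_singleton_add (hI : I.IsHomogeneous 𝒜) (hf : f ∈ 𝒜 δ)
    (hreg : ∀ g, g * f ∈ I → g ∈ I) (d : ℕ) :
    (I ⊔ span {f}).hilbertFunction 𝒜 (d + δ) + I.hilbertFunction 𝒜 d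
      = I.hilbertFunction 𝒜 (d + δ) := by
  have hinj : Function.Injective (LinearMap.mulLeft K (Quotient.mk I f)) := by
    refine (injective_iff_map_eq_zero _).mpr fun x hx => ?_
    obtain ⟨g, rfl⟩ := Quotient.mk_surjective x
    rw [LinearMap.mulLeft_apply, ← map_mul, Quotient.eq_zero_iff_mem, mul_comm] at hx
    exact Quotient.eq_zero_iff_mem.mpr (hreg g hx)
  rw [hilbertFunction, hilbertFunction, hilbertFunction, quotientGrade_eq_map_factorₐ le_sup_left,
    (Submodule.equivMapOfInjective _ hinj (I.quotientGrade 𝒜 d)).finrank_eq]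
  exact Submodule.finrank_map_add_finrank_of_inf_ker_eq _ (quotientGrade_add_inf_ker_eq hI hf d)

theorem hilbertFunction_sup_span_singleton_of_lt (hI : I.IsHomogeneous 𝒜) (hf : f ∈ 𝒜 δ)
    {d : ℕ} (hd : d < δ) :
    (I ⊔ span {f}).hilbertFunction 𝒜 d = I.hilbertFunction 𝒜 d := by
  have := Submodule.finrank_map_add_finrank_of_inf_ker_eq _ (quotientGrade_inf_ker_eq_bot hI hf hd)
  rwa [finrank_bot, add_zero, ← quotientGrade_eq_map_factorₐ] at this

theorem hilbertSeries_sup_span_singleton (hI : I.IsHomogeneous 𝒜) (hf : f ∈ 𝒜 δ)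
    (hreg : ∀ g, g * f ∈ I → g ∈ I) :
    (I ⊔ span {f}).hilbertSeries 𝒜 = (1 - PowerSeries.X ^ δ) * I.hilbertSeries 𝒜 := by
  ext d
  rw [sub_mul, one_mul, map_sub, PowerSeries.coeff_X_pow_mul', hilbertSeries, hilbertSeries,
    PowerSeries.coeff_mk, PowerSeries.coeff_mk, PowerSeries.coeff_mk]
  split_ifs with hd
  · obtain ⟨e, rfl⟩ := Nat.exists_eq_add_of_le' hd
    rw [Nat.add_sub_cancel, ← hilbertFunction_sup_span_singleton_add hI hf hreg e]
    push_cast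
    ring
  · rw [hilbertFunction_sup_span_singleton_of_lt hI hf (not_le.mp hd), sub_zero]

theorem hilbertSeries_span_range_of_regular {m : ℕ} (f : Fin m → A) (δ : Fin m → ℕ)
    (hf : ∀ i, f i ∈ 𝒜 (δ i))
    (hreg : ∀ i : Fin m, ∀ g : A, g * f i ∈ span {p | ∃ j : Fin m, j < i ∧ p = f j} →
      g ∈ span {p | ∃ j : Fin m, j < i ∧ p = f j}) :
    (span (Set.range f)).hilbertSeries 𝒜
      = (∏ i, (1 - PowerSeries.X ^ δ i)) * (⊥ : Ideal A).hilbertSeries 𝒜 := by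
  induction m with
  | zero => simp [Set.range_eq_empty]
  | succ m ih =>
    have hinit (i : Fin m) :
        {p | ∃ j, j < i.castSucc ∧ p = f j} = {p | ∃ j, j < i ∧ p = Fin.init f j} := by
      ext p
      simp [Fin.exists_fin_succ', Fin.init, (Fin.castSucc_lt_last i).not_gt]
    have hlast : {p | ∃ j, j < Fin.last m ∧ p = f j} = Set.range (Fin.init f) := by
      ext p
      simp [Fin.exists_fin_succ', Fin.init, eq_comm]
    have hrange : Set.range f = insert (f (Fin.last m)) (Set.range (Fin.init f)) := by
      rw [← Fin.range_snoc, Fin.snoc_init_self]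
    have hhom : (span (Set.range (Fin.init f))).IsHomogeneous 𝒜 :=
      homogeneous_span 𝒜 _ (by rintro _ ⟨i, rfl⟩; exact ⟨_, hf _⟩)
    rw [hrange, span_insert, sup_comm,
      hilbertSeries_sup_span_singleton hhom (hf _) (hlast ▸ hreg (Fin.last m)),
      ih (Fin.init f) (fun i => δ i.castSucc) (fun i => hf _) (fun i => hinit i ▸ hreg i.castSucc),
      Fin.prod_univ_castSucc]
    ring

theorem finrank_quotient_eq_sum_hilbertFunction (hI : I.IsHomogeneous 𝒜) {D : ℕ}
    (hD : ∀ d, D < d → I.hilbertFunction 𝒜 d = 0) :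
    finrank K (A ⧸ I) = ∑ d ∈ Finset.range (D + 1), I.hilbertFunction 𝒜 d := by
  let V (d : Fin (D + 1)) : Submodule K (A ⧸ I) := I.quotientGrade 𝒜 d
  let Φ := LinearMap.lsum K (fun d => V d) K fun d => (V d).subtype
  have hΦ (v) : Φ v = ∑ d, (v d : A ⧸ I) := by simp [Φ]
  have hinj : Function.Injective Φ := by
    refine (injective_iff_map_eq_zero _).mpr fun v hv => ?_
    choose g hg hgv using fun d => (v d).2
    have hsum : ∑ d, g d ∈ I := by
      rw [← Quotient.eq_zero_iff_mem, map_sum, ← hv, hΦ]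
      exact Finset.sum_congr rfl fun d _ => hgv d
    funext d
    exact Subtype.ext ((hgv d).symm.trans
      (Quotient.eq_zero_iff_mem.mpr (hI.mem_of_sum_mem Fin.val_injective hg hsum d)))
  have hsurj : Function.Surjective Φ := by
    rw [← LinearMap.range_eq_top, eq_top_iff, ← iSup_quotientGrade (𝒜 := 𝒜) I, iSup_le_iff]
    intro d x hx
    by_cases hd : d ≤ D
    · exact ⟨Pi.single ⟨d, Nat.lt_succ_of_le hd⟩ ⟨x, hx⟩, LinearMap.lsum_piSingle _ _ _ _ _ _⟩
    · rw [Submodule.finrank_eq_zero.mp (hD d (not_le.mp hd))] at hx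
      rw [(Submodule.mem_bot K).mp hx]
      exact zero_mem _
  rw [← (LinearEquiv.ofBijective Φ ⟨hinj, hsurj⟩).finrank_eq, Module.finrank_pi_fintype,
    ← Fin.sum_univ_eq_sum_range]
  rfl

theorem finrank_quotient_eq_eval_one (hI : I.IsHomogeneous 𝒜) {P : Polynomial ℤ}
    (hP : I.hilbertSeries 𝒜 = P) : (finrank K (A ⧸ I) : ℤ) = P.eval 1 := by
  have hcoeff (d : ℕ) : (I.hilbertFunction 𝒜 d : ℤ) = P.coeff d := by
    simpa [hilbertSeries] using congrArg (PowerSeries.coeff d) hP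
  rw [finrank_quotient_eq_sum_hilbertFunction hI (D := P.natDegree) fun d hd => by
    exact_mod_cast (hcoeff d).trans (P.coeff_eq_zero_of_natDegree_lt hd),
    Polynomial.eval_eq_sum_range]
  simp [hcoeff]

end Ideal

attribute [local instance] MvPolynomial.gradedAlgebra

namespace MvPolynomial

lemma mem_span_X_image_of_mul_X_mem {σ R : Type*} [CommSemiring R] {s : Set σ} {i : σ}
    (hi : i ∉ s) {g : MvPolynomial σ R} (h : g * X i ∈ Ideal.span (X '' s)) :
    g ∈ Ideal.span (X '' s) := by
  rw [mem_ideal_span_X_image] at h ⊢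
  intro m hm
  obtain ⟨j, hj, hmj⟩ := h (m + Finsupp.single i 1)
    (by rw [support_mul_X]; exact Finset.mem_map_of_mem _ hm)
  refine ⟨j, hj, ?_⟩
  rwa [Finsupp.add_apply, Finsupp.single_eq_of_ne (ne_of_mem_of_not_mem hj hi), add_zero] at hmj

variable {σ K : Type*} [Field K]

instance [Finite σ] (d : ℕ) : FiniteDimensional K (homogeneousSubmodule σ K d) :=
  Module.Finite.iff_fg.mpr (homogeneousSubmodule_fg σ K d)

lemma hilbertFunction_span_range_X (d : ℕ) :
    (Ideal.span (Set.range X : Set (MvPolynomial σ K))).hilbertFunction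
      (homogeneousSubmodule σ K) d = if d = 0 then 1 else 0 := by
  have hmem {p : MvPolynomial σ K} :
      p ∈ Ideal.span (Set.range X) ↔ ∀ m ∈ p.support, ∃ i, m i ≠ 0 := by
    simp [← Set.image_univ, mem_ideal_span_X_image]
  split_ifs with hd
  · subst hd
    rw [Ideal.hilbertFunction, Ideal.quotientGrade, homogeneousSubmodule_zero,
      Submodule.one_eq_span, Submodule.map_span, Set.image_singleton, AlgHom.toLinearMap_apply,
      map_one]
    refine finrank_span_singleton fun h => ?_
    simpa using hmem.mp (Ideal.Quotient.eq_zero_iff_mem.mp h) 0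
  · suffices Ideal.quotientGrade (homogeneousSubmodule σ K) (Ideal.span (Set.range X)) d = ⊥ by
      rw [Ideal.hilbertFunction, this, finrank_bot]
    rw [eq_bot_iff]
    rintro _ ⟨p, hp, rfl⟩
    refine (Submodule.mem_bot K).mpr (Ideal.Quotient.eq_zero_iff_mem.mpr (hmem.mpr fun m hm => ?_))
    have hdeg : m.degree = d := by
      rw [Finsupp.degree_eq_weight_one]
      exact hp (mem_support_iff.mp hm)
    by_contra! h
    exact hd (hdeg ▸ (Finsupp.degree_eq_zero_iff m).mpr (Finsupp.ext h))

lemma hilbertSeries_span_range_X :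
    (Ideal.span (Set.range X : Set (MvPolynomial σ K))).hilbertSeries
      (homogeneousSubmodule σ K) = 1 := by
  ext d
  simp [Ideal.hilbertSeries, hilbertFunction_span_range_X, PowerSeries.coeff_one]

lemma one_sub_X_pow_mul_hilbertSeries_bot (n : ℕ) :
    (1 - PowerSeries.X) ^ n * (⊥ : Ideal (MvPolynomial (Fin n) K)).hilbertSeries
      (homogeneousSubmodule (Fin n) K) = 1 := by
  have hreg (i : Fin n) (g : MvPolynomial (Fin n) K)
      (hg : g * X i ∈ Ideal.span {p | ∃ j : Fin n, j < i ∧ p = X j}) :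
      g ∈ Ideal.span {p | ∃ j : Fin n, j < i ∧ p = X j} := by
    have hset : {p | ∃ j : Fin n, j < i ∧ p = X j}
        = (X '' Set.Iio i : Set (MvPolynomial (Fin n) K)) := by
      ext p
      simp [eq_comm]
    rw [hset] at hg ⊢
    exact mem_span_X_image_of_mul_X_mem (s := Set.Iio i) (lt_irrefl i) hg
  have h := Ideal.hilbertSeries_span_range_of_regular (𝒜 := homogeneousSubmodule (Fin n) K) X
    (fun _ => 1) (isHomogeneous_X K) hreg
  rwa [hilbertSeries_span_range_X, Finset.prod_const, Finset.card_univ, Fintype.card_fin,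
    pow_one, eq_comm] at h

end MvPolynomial

theorem stmt_12_general {K : Type*} [Field K] {n : ℕ}
    (f : Fin n → MvPolynomial (Fin n) K) (δ : Fin n → ℕ)
    (hf : ∀ i, (f i).IsHomogeneous (δ i))
    (hreg : ∀ i : Fin n, ∀ g : MvPolynomial (Fin n) K,
      g * f i ∈ Ideal.span {p | ∃ j : Fin n, j < i ∧ p = f j} →
      g ∈ Ideal.span {p | ∃ j : Fin n, j < i ∧ p = f j}) :
    Module.finrank K (MvPolynomial (Fin n) K ⧸ Ideal.span (Set.range f))
      = ∏ i, δ i := by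
  let P : Polynomial ℤ := ∏ i, ∑ j ∈ Finset.range (δ i), Polynomial.X ^ j
  have hP : (Ideal.span (Set.range f)).hilbertSeries (homogeneousSubmodule (Fin n) K) = P := by
    have hgeom (i : Fin n) : 1 - PowerSeries.X ^ δ i
        = (∑ j ∈ Finset.range (δ i), (PowerSeries.X : PowerSeries ℤ) ^ j) * (1 - PowerSeries.X) :=
      (geom_sum_mul_neg _ _).symm
    rw [Ideal.hilbertSeries_span_range_of_regular f δ hf hreg,
      Finset.prod_congr rfl fun i _ => hgeom i, Finset.prod_mul_distrib, Finset.prod_const,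
      Finset.card_univ, Fintype.card_fin, mul_assoc,
      one_sub_X_pow_mul_hilbertSeries_bot, mul_one, ← Polynomial.coeToPowerSeries.ringHom_apply]
    simp [P]
  have hhom : (Ideal.span (Set.range f)).IsHomogeneous (homogeneousSubmodule (Fin n) K) :=
    Ideal.homogeneous_span _ _ (by rintro _ ⟨i, rfl⟩; exact ⟨δ i, hf i⟩)
  have h := Ideal.finrank_quotient_eq_eval_one hhom hP
  simp only [P, Polynomial.eval_prod, Polynomial.eval_finsetSum, Polynomial.eval_pow,
    Polynomial.eval_X, one_pow, Finset.sum_const, Finset.card_range, nsmul_one] at h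
  exact_mod_cast h

/-- for a regular sequence `(f₁,…,fₙ)` of nonzero homogeneous polynomials in
`K[x₁,…,xₙ]` with `deg fᵢ = δᵢ`, the dimension of `K[x₁,…,xₙ]/⟨f₁,…,fₙ⟩` as a `K`-vector
space equals `δ₁δ₂⋯δₙ`. -/
theorem stmt_12 {K : Type*} [Field K] {n : ℕ}
    (f : Fin n → MvPolynomial (Fin n) K) (δ : Fin n → ℕ)
    (hf0 : ∀ i, f i ≠ 0) (hf : ∀ i, (f i).IsHomogeneous (δ i))
    (hreg : ∀ i : Fin n, ∀ g : MvPolynomial (Fin n) K,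
      g * f i ∈ Ideal.span {p | ∃ j : Fin n, j < i ∧ p = f j} →
      g ∈ Ideal.span {p | ∃ j : Fin n, j < i ∧ p = f j}) :
    Module.finrank K (MvPolynomial (Fin n) K ⧸ Ideal.span (Set.range f))
      = ∏ i, δ i :=
  stmt_12_general f δ hf hreg
end
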